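/- arXiv:2404.16707 — 2 statements merged into one kernel-verified Lean document; each statement's English description precedes it below -/
import Mathlib

section
/- Let n ∈ ℕ, 0 < α < n, 0 < ε ≤ α, let Q ⊆ ℝⁿ be an open cube with center x₀, and let f ∈ L¹(ℝⁿ) with supp f ⊆ 2Q (the cube with the same center and twice the side length). Then there exists a constant C depending only on n, α, ε such that ∫_Q |I_α f| dH^{n−α+ε}_∞ ≤ C ℓ(Q)^{n−α+ε} M_α f(x₀). -/
open MeasureTheory Filter Set Metric ENNReal

noncomputable section

abbrev Rn (n : ℕ) := EuclideanSpace ℝ (Fin n)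

/-- The open axis-parallel cube with center `z` and side length `l`. -/
def cube (n : ℕ) (z : Rn n) (l : ℝ) : Set (Rn n) := {x | ∀ i, |x i - z i| < l / 2}

/-- The `β`-dimensional Hausdorff content `H^β_∞`. -/
def hContent (n : ℕ) (β : ℝ) (E : Set (Rn n)) : ℝ≥0∞ :=
  ⨅ (c : ℕ → Rn n) (r : ℕ → NNReal) (_ : E ⊆ ⋃ i, Metric.ball (c i) (r i)),
    ∑' i, ENNReal.ofReal (Real.pi ^ (β / 2) / Real.Gamma (β / 2 + 1) * (r i : ℝ) ^ β)

/-- Choquet integral of `g` over `Ω` with respect to `H^β_∞`. -/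
def choquet (n : ℕ) (β : ℝ) (Ω : Set (Rn n)) (g : Rn n → ℝ) : ℝ≥0∞ :=
  ∫⁻ t in Set.Ioi (0 : ℝ), hContent n β {x | x ∈ Ω ∧ t < g x}

/-- The normalization constant `γ(α)` of the Riesz potential. -/
def rieszConst (n : ℕ) (α : ℝ) : ℝ :=
  Real.pi ^ ((n : ℝ) / 2) * 2 ^ α * Real.Gamma (α / 2) / Real.Gamma (((n : ℝ) - α) / 2)

/-- The Riesz potential `I_α f`. -/
def riesz (n : ℕ) (α : ℝ) (f : Rn n → ℝ) (x : Rn n) : ℝ :=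
  (rieszConst n α)⁻¹ * ∫ y, f y / ‖x - y‖ ^ ((n : ℝ) - α)

/-- The `BMO^β` seminorm. -/
def bmoBeta (n : ℕ) (β : ℝ) (u : Rn n → ℝ) : ℝ≥0∞ :=
  ⨆ (z : Rn n) (l : ℝ) (_ : 0 < l),
    ⨅ c : ℝ, choquet n β (cube n z l) (fun x => |u x - c|) / ENNReal.ofReal (l ^ β)

/-- The Morrey norm `‖f‖_{M^α_p}`. -/
def morrey (n : ℕ) (α p : ℝ) (f : Rn n → ℝ) : ℝ≥0∞ :=
  ⨆ (z : Rn n) (l : ℝ) (_ : 0 < l),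
    ENNReal.ofReal (l ^ α) *
      ((∫⁻ y in cube n z l, ENNReal.ofReal (|f y| ^ p)) / ENNReal.ofReal (l ^ (n : ℝ))) ^ (1 / p)

/-- The weak Lebesgue norm `‖f‖_{L^{q,∞}}`. -/
def weakNorm (n : ℕ) (q : ℝ) (f : Rn n → ℝ) : ℝ≥0∞ :=
  ⨆ (lam : ℝ) (_ : 0 < lam),
    ENNReal.ofReal lam * (volume {x : Rn n | lam < |f x|}) ^ (1 / q)

/-- The classical `BMO` seminorm. -/
def bmoSemi (n : ℕ) (u : Rn n → ℝ) : ℝ≥0∞ :=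
  ⨆ (z : Rn n) (l : ℝ) (_ : 0 < l),
    (∫⁻ x in cube n z l, ENNReal.ofReal |u x - ⨍ y in cube n z l, u y|) / volume (cube n z l)

/-- The fractional maximal function `M_η f`. -/
def fracMax (n : ℕ) (η : ℝ) (f : Rn n → ℝ) (x : Rn n) : ℝ≥0∞ :=
  ⨆ (r : ℝ) (_ : 0 < r),
    ENNReal.ofReal (r ^ (η - (n : ℝ))) * ∫⁻ y in Metric.ball x r, ENNReal.ofReal |f y|

def hconst (β : ℝ) : ℝ := Real.pi ^ (β / 2) / Real.Gamma (β / 2 + 1)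

lemma hconst_pos {β : ℝ} (hβ : 0 < β) : 0 < hconst β := by
  apply div_pos (Real.rpow_pos_of_pos Real.pi_pos _)
  exact Real.Gamma_pos_of_pos (by linarith)

lemma hContent_mono {n : ℕ} {β : ℝ} {E F : Set (Rn n)} (h : E ⊆ F) :
    hContent n β E ≤ hContent n β F := by
  refine le_iInf fun c => le_iInf fun r => le_iInf fun hc => ?_
  exact iInf_le_of_le c (iInf_le_of_le r (iInf_le_of_le (h.trans hc) le_rfl))

lemma hContent_le_tsum {n : ℕ} {β : ℝ} (hβ : 0 < β) {E : Set (Rn n)} {ι : Type}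
    [Countable ι] (c : ι → Rn n) (r : ι → ℝ) (hr : ∀ i, 0 ≤ r i)
    (hcov : E ⊆ ⋃ i, Metric.ball (c i) (r i)) :
    hContent n β E ≤ ∑' i, ENNReal.ofReal (hconst β * r i ^ β) := by
  classical
  obtain ⟨g, hg⟩ := exists_injective_nat ι
  set c' : ℕ → Rn n := fun k => if h : ∃ i, g i = k then c h.choose else 0 with hc'
  set r' : ℕ → NNReal := fun k => if h : ∃ i, g i = k then (r h.choose).toNNReal else 0 with hr'
  have hchoose : ∀ i : ι, (⟨i, rfl⟩ : ∃ j, g j = g i).choose = i := by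
    intro i
    exact hg (⟨i, rfl⟩ : ∃ j, g j = g i).choose_spec
  have hcov' : E ⊆ ⋃ k, Metric.ball (c' k) (r' k) := by
    intro x hx
    obtain ⟨_, ⟨i, rfl⟩, hxi⟩ := hcov hx
    refine mem_iUnion.2 ⟨g i, ?_⟩
    have h1 : c' (g i) = c i := by simp only [hc', dif_pos (⟨i, rfl⟩ : ∃ j, g j = g i), hchoose]
    have h2 : (r' (g i) : ℝ) = r i := by
      simp only [hr', dif_pos (⟨i, rfl⟩ : ∃ j, g j = g i), hchoose]
      exact Real.coe_toNNReal _ (hr i)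
    rw [mem_ball, h1, h2]
    exact hxi
  refine le_trans (iInf_le_of_le c' (iInf_le_of_le r' (iInf_le_of_le hcov' le_rfl))) ?_
  have hsupp : Function.support (fun k => ENNReal.ofReal (hconst β * ((r' k : ℝ)) ^ β))
      ⊆ Set.range g := by
    intro k hk
    by_contra hkr
    have : ¬ ∃ i, g i = k := by
      rintro ⟨i, rfl⟩; exact hkr ⟨i, rfl⟩
    apply hk
    simp only [hr', dif_neg this, NNReal.coe_zero, Real.zero_rpow hβ.ne', mul_zero,
      ENNReal.ofReal_zero]
  have heq : ∑' k, ENNReal.ofReal (hconst β * ((r' k : ℝ)) ^ β)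
      = ∑' i, ENNReal.ofReal (hconst β * r i ^ β) := by
    rw [← hg.tsum_eq hsupp]
    congr 1
    funext i
    have h2 : (r' (g i) : ℝ) = r i := by
      simp only [hr', dif_pos (⟨i, rfl⟩ : ∃ j, g j = g i), hchoose]
      exact Real.coe_toNNReal _ (hr i)
    rw [h2]
  exact le_of_eq heq

lemma hContent_le_ball {n : ℕ} {β : ℝ} (hβ : 0 < β) {E : Set (Rn n)} {z : Rn n} {ρ : ℝ}
    (hρ : 0 ≤ ρ) (h : E ⊆ ball z ρ) :
    hContent n β E ≤ ENNReal.ofReal (hconst β * ρ ^ β) := by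
  have := hContent_le_tsum (n := n) hβ (ι := PUnit) (fun _ => z) (fun _ => ρ)
    (fun _ => hρ) (fun x hx => mem_iUnion.2 ⟨PUnit.unit, h hx⟩)
  rwa [tsum_eq_single PUnit.unit (fun b' hb' => (hb' (Subsingleton.elim _ _)).elim)] at this

lemma hContent_empty {n : ℕ} {β : ℝ} (hβ : 0 < β) : hContent n β (∅ : Set (Rn n)) = 0 := by
  refine le_antisymm ?_ zero_le
  have := hContent_le_ball (n := n) hβ (E := ∅) (z := 0) (ρ := 0) le_rfl (by simp)
  simpa [Real.zero_rpow hβ.ne'] using this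

lemma rieszConst_pos {n : ℕ} {α : ℝ} (hα0 : 0 < α) (hαn : α < n) : 0 < rieszConst n α := by
  apply div_pos
  · apply mul_pos (mul_pos (Real.rpow_pos_of_pos Real.pi_pos _)
      (Real.rpow_pos_of_pos two_pos _))
    exact Real.Gamma_pos_of_pos (by linarith)
  · exact Real.Gamma_pos_of_pos (by linarith)

lemma lintegral_ball_le_fracMax {n : ℕ} (η : ℝ) (f : Rn n → ℝ) (x : Rn n) {r : ℝ}
    (hr : 0 < r) :
    ∫⁻ y in ball x r, ENNReal.ofReal |f y|
      ≤ ENNReal.ofReal (r ^ ((n : ℝ) - η)) * fracMax n η f x := by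
  have h1 : ENNReal.ofReal (r ^ (η - (n : ℝ))) * ∫⁻ y in ball x r, ENNReal.ofReal |f y|
      ≤ fracMax n η f x := le_iSup_of_le r (le_iSup_of_le hr le_rfl)
  have hr0 : r ^ ((n : ℝ) - η) * r ^ (η - (n : ℝ)) = 1 := by
    rw [← Real.rpow_add hr, show ((n : ℝ) - η) + (η - (n : ℝ)) = 0 by ring, Real.rpow_zero]
  calc ∫⁻ y in ball x r, ENNReal.ofReal |f y|
      = ENNReal.ofReal (r ^ ((n : ℝ) - η) * r ^ (η - (n : ℝ)))
        * ∫⁻ y in ball x r, ENNReal.ofReal |f y| := by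
        rw [hr0, ENNReal.ofReal_one, one_mul]
    _ = ENNReal.ofReal (r ^ ((n : ℝ) - η)) *
        (ENNReal.ofReal (r ^ (η - (n : ℝ))) * ∫⁻ y in ball x r, ENNReal.ofReal |f y|) := by
        rw [ENNReal.ofReal_mul (Real.rpow_nonneg hr.le _), mul_assoc]
    _ ≤ _ := mul_le_mul_right h1 _

lemma riesz_pointwise {n : ℕ} {α : ℝ} (hα0 : 0 < α) (hαn : α < n) (f : Rn n → ℝ) (x : Rn n) :
    ENNReal.ofReal |riesz n α f x| ≤ ENNReal.ofReal (rieszConst n α)⁻¹ *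
      ∫⁻ y, ENNReal.ofReal |f y| * ENNReal.ofReal (‖x - y‖ ^ (α - (n : ℝ))) := by
  have hc := rieszConst_pos hα0 hαn
  rw [riesz, abs_mul, abs_of_pos (inv_pos.2 hc), ENNReal.ofReal_mul (inv_pos.2 hc).le]
  refine mul_le_mul_right ?_ _
  have h1 : |∫ y, f y / ‖x - y‖ ^ ((n : ℝ) - α)|
      ≤ (∫⁻ y, ENNReal.ofReal ‖f y / ‖x - y‖ ^ ((n : ℝ) - α)‖).toReal := by
    simpa using norm_integral_le_lintegral_norm (μ := volume)
      (fun y => f y / ‖x - y‖ ^ ((n : ℝ) - α))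
  refine le_trans (ENNReal.ofReal_le_ofReal h1) (le_trans ENNReal.ofReal_toReal_le ?_)
  refine lintegral_mono fun y => le_of_eq ?_
  have h2 : ‖f y / ‖x - y‖ ^ ((n : ℝ) - α)‖ = |f y| * ‖x - y‖ ^ (α - (n : ℝ)) := by
    rw [Real.norm_eq_abs, abs_div, abs_of_nonneg (Real.rpow_nonneg (norm_nonneg _) _),
      div_eq_mul_inv, ← Real.rpow_neg (norm_nonneg _), neg_sub]
  rw [h2, ENNReal.ofReal_mul (abs_nonneg _)]

lemma hedberg {n : ℕ} {α ε : ℝ} (hα0 : 0 < α) (hαn : α < n) (hε0 : 0 < ε) (hεα : ε ≤ α)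
    (f : Rn n → ℝ) (x : Rn n) {δ : ℝ} (hδ : 0 < δ) :
    (∫⁻ y, ENNReal.ofReal |f y| * ENNReal.ofReal (‖x - y‖ ^ (α - (n : ℝ))))
      ≤ ENNReal.ofReal (2 ^ ((n : ℝ) - α) * (1 - (2 : ℝ)⁻¹ ^ ε)⁻¹ * δ ^ ε)
          * fracMax n (α - ε) f x
        + ENNReal.ofReal (δ ^ (α - (n : ℝ))) * ∫⁻ y, ENNReal.ofReal |f y| := by
  have hαn' : α - (n : ℝ) < 0 := by linarith
  set F : Rn n → ℝ≥0∞ :=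
    fun y => ENNReal.ofReal |f y| * ENNReal.ofReal (‖x - y‖ ^ (α - (n : ℝ))) with hF
  set M : ℝ≥0∞ := fracMax n (α - ε) f x with hM
  rw [← lintegral_add_compl F (measurableSet_ball (x := x) (ε := δ))]
  have far : ∫⁻ y in (ball x δ)ᶜ, F y
      ≤ ENNReal.ofReal (δ ^ (α - (n : ℝ))) * ∫⁻ y, ENNReal.ofReal |f y| := by
    have step : ∫⁻ y in (ball x δ)ᶜ, F y
        ≤ ∫⁻ y in (ball x δ)ᶜ, ENNReal.ofReal (δ ^ (α - (n : ℝ))) * ENNReal.ofReal |f y| := by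
      refine setLIntegral_mono' measurableSet_ball.compl fun y hy => ?_
      have hdist : δ ≤ ‖x - y‖ := by
        have := mem_ball.not.1 hy
        rw [dist_comm] at this
        rw [← dist_eq_norm]
        linarith [not_lt.1 this]
      have hker : ‖x - y‖ ^ (α - (n : ℝ)) ≤ δ ^ (α - (n : ℝ)) :=
        Real.rpow_le_rpow_of_nonpos hδ hdist hαn'.le
      rw [hF, mul_comm (ENNReal.ofReal (δ ^ (α - (n : ℝ)))) (ENNReal.ofReal |f y|)]
      exact mul_le_mul' le_rfl (ENNReal.ofReal_le_ofReal hker)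
    refine step.trans ?_
    rw [lintegral_const_mul' _ _ ENNReal.ofReal_ne_top]
    exact mul_le_mul_right (setLIntegral_le_lintegral _ _) _
  have near : ∫⁻ y in ball x δ, F y
      ≤ ENNReal.ofReal (2 ^ ((n : ℝ) - α) * (1 - (2 : ℝ)⁻¹ ^ ε)⁻¹ * δ ^ ε) * M := by
    set ρ : ℕ → ℝ := fun j => δ * (2 : ℝ)⁻¹ ^ j with hρ
    have hρpos : ∀ j, 0 < ρ j := fun j => mul_pos hδ (pow_pos (by norm_num) j)
    have hρsucc : ∀ j, ρ (j + 1) = ρ j * 2⁻¹ := fun j => by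
      simp only [hρ, pow_succ]; ring
    set A : ℕ → Set (Rn n) := fun j => ball x (ρ j) \ ball x (ρ (j + 1)) with hA
    have cover : ball x δ ⊆ {x} ∪ ⋃ j, A j := by
      intro y hy
      by_cases hyx : y = x
      · exact Or.inl (by simp [hyx])
      · right
        have hd0 : 0 < dist y x := dist_pos.2 hyx
        have hdδ : dist y x < δ := mem_ball.1 hy
        obtain ⟨k, hk⟩ := exists_pow_lt_of_lt_one (div_pos hd0 hδ)
          (by norm_num : (2 : ℝ)⁻¹ < 1)
        have hP : ∃ j, δ * (2 : ℝ)⁻¹ ^ (j + 1) ≤ dist y x := by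
          refine ⟨k, ?_⟩
          have h1 : (2 : ℝ)⁻¹ ^ (k + 1) ≤ (2 : ℝ)⁻¹ ^ k :=
            pow_le_pow_of_le_one (by norm_num) (by norm_num) (Nat.le_succ k)
          have h2 := (lt_div_iff₀ hδ).1 hk
          nlinarith [hδ]
        refine mem_iUnion.2 ⟨Nat.find hP, ?_⟩
        constructor
        · rw [mem_ball]
          rcases Nat.eq_zero_or_pos (Nat.find hP) with h0 | hpos
          · rw [h0]; simpa [hρ] using hdδ
          · have := Nat.find_min hP (Nat.sub_lt hpos one_pos)
            have heq : Nat.find hP - 1 + 1 = Nat.find hP := Nat.succ_pred_eq_of_pos hpos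
            rw [heq] at this
            simpa [hρ] using not_le.1 this
        · rw [mem_ball]
          have := Nat.find_spec hP
          simp only [hρ]
          exact not_lt.2 this
    have hzero : ∫⁻ y in ({x} : Set (Rn n)), F y = 0 := by
      refine le_antisymm ?_ zero_le
      refine le_trans (setLIntegral_mono' (measurableSet_singleton x)
        (g := fun _ => 0) (fun y hy => ?_)) (by simp)
      have hy' : y = x := hy
      refine le_of_eq ?_
      rw [hF]
      simp only [hy', sub_self, norm_zero, Real.zero_rpow hαn'.ne, ENNReal.ofReal_zero,
        mul_zero]
    have hterm : ∀ j, ∫⁻ y in A j, F y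
        ≤ ENNReal.ofReal (2 ^ ((n : ℝ) - α) * δ ^ ε) * M
            * ENNReal.ofReal ((2 : ℝ)⁻¹ ^ ε) ^ j := by
      intro j
      have step1 : ∫⁻ y in A j, F y
          ≤ ENNReal.ofReal (ρ (j + 1) ^ (α - (n : ℝ)))
              * ∫⁻ y in ball x (ρ j), ENNReal.ofReal |f y| := by
        have s1 : ∫⁻ y in A j, F y
            ≤ ∫⁻ y in A j,
                ENNReal.ofReal (ρ (j + 1) ^ (α - (n : ℝ))) * ENNReal.ofReal |f y| := by
          refine setLIntegral_mono' (measurableSet_ball.diff measurableSet_ball)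
            fun y hy => ?_
          have hdist : ρ (j + 1) ≤ ‖x - y‖ := by
            have := hy.2
            rw [mem_ball, dist_comm, ← dist_eq_norm] at *
            exact not_lt.1 (by simpa using this)
          have hker : ‖x - y‖ ^ (α - (n : ℝ)) ≤ ρ (j + 1) ^ (α - (n : ℝ)) :=
            Real.rpow_le_rpow_of_nonpos (hρpos (j + 1)) hdist hαn'.le
          rw [hF, mul_comm (ENNReal.ofReal (ρ (j + 1) ^ (α - (n : ℝ)))) (ENNReal.ofReal |f y|)]
          exact mul_le_mul' le_rfl (ENNReal.ofReal_le_ofReal hker)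
        refine s1.trans ?_
        rw [lintegral_const_mul' _ _ ENNReal.ofReal_ne_top]
        exact mul_le_mul_right (lintegral_mono_set diff_subset) _
      refine step1.trans ?_
      refine le_trans (mul_le_mul_right
        (lintegral_ball_le_fracMax (α - ε) f x (hρpos j)) _) (le_of_eq ?_)
      rw [← mul_assoc, ← ENNReal.ofReal_mul (Real.rpow_nonneg (hρpos (j+1)).le _)]
      have key : ρ (j + 1) ^ (α - (n : ℝ)) * ρ j ^ ((n : ℝ) - (α - ε))
          = 2 ^ ((n : ℝ) - α) * δ ^ ε * ((2 : ℝ)⁻¹ ^ ε) ^ j := by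
        have e1 : ρ (j + 1) ^ (α - (n : ℝ))
            = ρ j ^ (α - (n : ℝ)) * 2 ^ ((n : ℝ) - α) := by
          rw [hρsucc j, Real.mul_rpow (hρpos j).le (by norm_num),
            Real.inv_rpow (by norm_num), ← Real.rpow_neg (by norm_num), neg_sub]
        rw [e1, mul_assoc, mul_comm (2 ^ ((n : ℝ) - α)) _, ← mul_assoc,
          ← Real.rpow_add (hρpos j),
          show α - (n : ℝ) + ((n : ℝ) - (α - ε)) = ε by ring]
        have e2 : ρ j ^ ε = δ ^ ε * ((2 : ℝ)⁻¹ ^ ε) ^ j := by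
          rw [hρ]
          rw [Real.mul_rpow hδ.le (pow_nonneg (by norm_num) j),
            ← Real.rpow_natCast ((2 : ℝ)⁻¹) j, ← Real.rpow_natCast ((2 : ℝ)⁻¹ ^ ε) j,
            ← Real.rpow_mul (by norm_num), ← Real.rpow_mul (by norm_num), mul_comm ε _]
        rw [e2]; ring
      rw [key, ENNReal.ofReal_mul (by positivity), ENNReal.ofReal_pow (by positivity)]
      ring
    have geom : ∑' j : ℕ, ENNReal.ofReal ((2 : ℝ)⁻¹ ^ ε) ^ j
        = ENNReal.ofReal ((1 - (2 : ℝ)⁻¹ ^ ε)⁻¹) := by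
      have hq1 : (2 : ℝ)⁻¹ ^ ε < 1 :=
        Real.rpow_lt_one (by norm_num) (by norm_num) hε0
      have hq0 : (0 : ℝ) ≤ (2 : ℝ)⁻¹ ^ ε := Real.rpow_nonneg (by norm_num) _
      rw [ENNReal.tsum_geometric, ← ENNReal.ofReal_one, ← ENNReal.ofReal_sub _ hq0,
        ← ENNReal.ofReal_inv_of_pos (by linarith)]
    calc ∫⁻ y in ball x δ, F y ≤ ∫⁻ y in {x} ∪ ⋃ j, A j, F y := lintegral_mono_set cover
      _ ≤ (∫⁻ y in ({x} : Set (Rn n)), F y) + ∫⁻ y in ⋃ j, A j, F y :=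
          lintegral_union_le _ _ _
      _ = ∫⁻ y in ⋃ j, A j, F y := by rw [hzero, zero_add]
      _ ≤ ∑' j, ∫⁻ y in A j, F y := lintegral_iUnion_le _ _
      _ ≤ ∑' j, ENNReal.ofReal (2 ^ ((n : ℝ) - α) * δ ^ ε) * M
            * ENNReal.ofReal ((2 : ℝ)⁻¹ ^ ε) ^ j := ENNReal.tsum_le_tsum hterm
      _ = ENNReal.ofReal (2 ^ ((n : ℝ) - α) * δ ^ ε) * M
            * ∑' j, ENNReal.ofReal ((2 : ℝ)⁻¹ ^ ε) ^ j := ENNReal.tsum_mul_left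
      _ = ENNReal.ofReal (2 ^ ((n : ℝ) - α) * (1 - (2 : ℝ)⁻¹ ^ ε)⁻¹ * δ ^ ε) * M := by
          have hsplit : ENNReal.ofReal (2 ^ ((n : ℝ) - α) * δ ^ ε * (1 - (2 : ℝ)⁻¹ ^ ε)⁻¹)
              = ENNReal.ofReal (2 ^ ((n : ℝ) - α) * δ ^ ε)
                * ENNReal.ofReal ((1 - (2 : ℝ)⁻¹ ^ ε)⁻¹) :=
            ENNReal.ofReal_mul (by positivity)
          rw [geom,
            show (2:ℝ) ^ ((n : ℝ) - α) * (1 - (2 : ℝ)⁻¹ ^ ε)⁻¹ * δ ^ ε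
              = 2 ^ ((n : ℝ) - α) * δ ^ ε * (1 - (2 : ℝ)⁻¹ ^ ε)⁻¹ by ring, hsplit]
          ring
  exact add_le_add near far

lemma weakType {n : ℕ} {η : ℝ} (hη : 0 ≤ η) (hηn : η < n) (f : Rn n → ℝ)
    (hf : ∫⁻ y, ENNReal.ofReal |f y| ∂(volume : Measure (Rn n)) ≠ ⊤) {s : ℝ} (hs : 0 < s) :
    hContent n ((n : ℝ) - η) {x | ENNReal.ofReal s < fracMax n η f x}
      ≤ ENNReal.ofReal (hconst ((n : ℝ) - η) * 5 ^ ((n : ℝ) - η)) * (ENNReal.ofReal s)⁻¹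
          * ∫⁻ y, ENNReal.ofReal |f y| := by
  set β : ℝ := (n : ℝ) - η with hβdef
  have hβ : 0 < β := by simp only [hβdef]; linarith
  set Ftot : ℝ≥0∞ := ∫⁻ y, ENNReal.ofReal |f y| ∂(volume : Measure (Rn n)) with hFtot
  set E : Set (Rn n) := {x | ENNReal.ofReal s < fracMax n η f x} with hE
  have hex : ∀ x ∈ E, ∃ r : ℝ, 0 < r ∧
      ENNReal.ofReal (s * r ^ β) < ∫⁻ y in ball x r, ENNReal.ofReal |f y| := by
    intro x hx
    have hx' := hx
    rw [hE, mem_setOf_eq, fracMax, lt_iSup_iff] at hx'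
    obtain ⟨r, hr⟩ := hx'
    rw [lt_iSup_iff] at hr
    obtain ⟨hrpos, hr⟩ := hr
    refine ⟨r, hrpos, ?_⟩
    have key : ENNReal.ofReal (s * r ^ β)
        = ENNReal.ofReal (r ^ β) * ENNReal.ofReal s := by
      rw [← ENNReal.ofReal_mul (Real.rpow_nonneg hrpos.le _), mul_comm]
    rw [key]
    calc ENNReal.ofReal (r ^ β) * ENNReal.ofReal s
        < ENNReal.ofReal (r ^ β) *
          (ENNReal.ofReal (r ^ (η - (n : ℝ))) * ∫⁻ y in ball x r, ENNReal.ofReal |f y|) := by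
          refine (ENNReal.mul_lt_mul_iff_right ?_ ?_).2 hr
          · simp [ENNReal.ofReal_eq_zero, not_le, Real.rpow_pos_of_pos hrpos]
          · exact ENNReal.ofReal_ne_top
      _ = ENNReal.ofReal (r ^ β * r ^ (η - (n : ℝ)))
            * ∫⁻ y in ball x r, ENNReal.ofReal |f y| := by
          rw [ENNReal.ofReal_mul (Real.rpow_nonneg hrpos.le _), mul_assoc]
      _ = ∫⁻ y in ball x r, ENNReal.ofReal |f y| := by
          rw [← Real.rpow_add hrpos, hβdef, show (n : ℝ) - η + (η - (n : ℝ)) = 0 by ring,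
            Real.rpow_zero, ENNReal.ofReal_one, one_mul]
  classical
  choose! rad hrad1 hrad2 using hex
  have hradbd : ∀ x ∈ E, rad x ≤ (Ftot.toReal / s) ^ β⁻¹ := by
    intro x hx
    have h1 : ENNReal.ofReal (s * rad x ^ β) < Ftot :=
      lt_of_lt_of_le (hrad2 x hx) (setLIntegral_le_lintegral _ _)
    have h2 : s * rad x ^ β < Ftot.toReal := by
      rw [← ENNReal.ofReal_toReal hf] at h1
      exact (ENNReal.ofReal_lt_ofReal_iff_of_nonneg
        (mul_nonneg hs.le (Real.rpow_nonneg (hrad1 x hx).le _))).1 h1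
    have h3 : rad x ^ β ≤ Ftot.toReal / s := by
      rw [le_div_iff₀ hs]; nlinarith [h2]
    calc rad x = (rad x ^ β) ^ β⁻¹ :=
          (Real.rpow_rpow_inv (hrad1 x hx).le hβ.ne').symm
      _ ≤ (Ftot.toReal / s) ^ β⁻¹ :=
          Real.rpow_le_rpow (Real.rpow_nonneg (hrad1 x hx).le _) h3 (by positivity)
  obtain ⟨u, huE, hdisj, hcover⟩ :=
    Vitali.exists_disjoint_subfamily_covering_enlargement_closedBall E id rad
      ((Ftot.toReal / s) ^ β⁻¹) hradbd 4 (by norm_num)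
  have hdisjballs : u.PairwiseDisjoint fun a => ball a (rad a) :=
    hdisj.mono_on fun a _ => ball_subset_closedBall
  have hucnt : u.Countable :=
    hdisjballs.countable_of_isOpen (fun a _ => isOpen_ball)
      (fun a ha => nonempty_ball.2 (hrad1 a (huE ha)))
  haveI := hucnt.to_subtype
  have hcov2 : E ⊆ ⋃ b : u, ball (b : Rn n) (5 * rad (b : Rn n)) := by
    intro a ha
    obtain ⟨b, hb, hsub⟩ := hcover a ha
    refine mem_iUnion.2 ⟨⟨b, hb⟩, ?_⟩
    have h1 : (id a : Rn n) ∈ closedBall (id a) (rad a) :=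
      mem_closedBall_self (hrad1 a ha).le
    have h2 := hsub h1
    have h3 : closedBall (id b) (4 * rad b) ⊆ ball b (5 * rad b) := by
      apply closedBall_subset_ball
      have := hrad1 b (huE hb)
      nlinarith
    exact h3 h2
  refine le_trans (hContent_le_tsum hβ (fun b : u => (b : Rn n))
    (fun b => 5 * rad (b : Rn n))
    (fun b => mul_nonneg (by norm_num) (hrad1 _ (huE b.2)).le) hcov2) ?_
  set c0 : ℝ≥0∞ := ENNReal.ofReal (hconst β * 5 ^ β) with hc0
  have hsnz : ENNReal.ofReal s ≠ 0 := by simp [ENNReal.ofReal_eq_zero, not_le, hs]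
  have perterm : ∀ b : u, ENNReal.ofReal (hconst β * (5 * rad (b : Rn n)) ^ β)
      ≤ (c0 * (ENNReal.ofReal s)⁻¹)
          * ∫⁻ y in ball (b : Rn n) (rad (b : Rn n)), ENNReal.ofReal |f y| := by
    intro b
    have hrb : 0 < rad (b : Rn n) := hrad1 _ (huE b.2)
    have e : hconst β * (5 * rad (b : Rn n)) ^ β = hconst β * 5 ^ β * rad (b : Rn n) ^ β := by
      rw [Real.mul_rpow (by norm_num) hrb.le]; ring
    have h4 : ENNReal.ofReal s * ENNReal.ofReal (rad (b : Rn n) ^ β)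
        ≤ ∫⁻ y in ball (b : Rn n) (rad (b : Rn n)), ENNReal.ofReal |f y| := by
      rw [← ENNReal.ofReal_mul hs.le]
      exact (hrad2 _ (huE b.2)).le
    have h5 : ENNReal.ofReal (rad (b : Rn n) ^ β)
        ≤ (ENNReal.ofReal s)⁻¹
            * ∫⁻ y in ball (b : Rn n) (rad (b : Rn n)), ENNReal.ofReal |f y| := by
      rw [← one_mul (ENNReal.ofReal (rad (b : Rn n) ^ β)),
        ← ENNReal.inv_mul_cancel hsnz ENNReal.ofReal_ne_top, mul_assoc]
      exact mul_le_mul_right h4 _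
    rw [e, ENNReal.ofReal_mul (mul_nonneg (hconst_pos hβ).le (Real.rpow_nonneg (by norm_num) _)),
      mul_assoc]
    exact mul_le_mul_right h5 _
  have hdisj2 : Pairwise (Function.onFun Disjoint fun b : u => ball (b : Rn n) (rad (b : Rn n))) :=
    hdisjballs.subtype _ _
  have hsum : ∑' b : u, ∫⁻ y in ball (b : Rn n) (rad (b : Rn n)), ENNReal.ofReal |f y|
      ≤ Ftot := by
    rw [← lintegral_iUnion (fun b => measurableSet_ball) hdisj2]
    exact setLIntegral_le_lintegral _ _
  calc ∑' b : u, ENNReal.ofReal (hconst β * (5 * rad (b : Rn n)) ^ β)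
      ≤ ∑' b : u, (c0 * (ENNReal.ofReal s)⁻¹)
          * ∫⁻ y in ball (b : Rn n) (rad (b : Rn n)), ENNReal.ofReal |f y| :=
        ENNReal.tsum_le_tsum perterm
    _ = (c0 * (ENNReal.ofReal s)⁻¹)
          * ∑' b : u, ∫⁻ y in ball (b : Rn n) (rad (b : Rn n)), ENNReal.ofReal |f y| :=
        ENNReal.tsum_mul_left
    _ ≤ (c0 * (ENNReal.ofReal s)⁻¹) * Ftot := mul_le_mul_right hsum _
    _ = c0 * (ENNReal.ofReal s)⁻¹ * Ftot := rfl

lemma lintegral_Ioi_ofReal_rpow {p a : ℝ} (hp : p < -1) (ha : 0 < a) :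
    ∫⁻ t in Ioi a, ENNReal.ofReal (t ^ p) = ENNReal.ofReal (a ^ (p + 1) / (-(p + 1))) := by
  have hnn : 0 ≤ᵐ[volume.restrict (Ioi a)] fun t : ℝ => t ^ p := by
    filter_upwards [ae_restrict_mem measurableSet_Ioi] with t ht
    exact Real.rpow_nonneg (le_of_lt (lt_trans ha ht)) _
  rw [← ofReal_integral_eq_lintegral_ofReal (integrableOn_Ioi_rpow_of_lt hp ha) hnn,
    integral_Ioi_rpow_of_lt hp ha]
  congr 1
  rw [div_eq_div_iff (by linarith) (by linarith)]
  ring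

lemma cube_subset_ball {n : ℕ} (hn : 0 < n) (z : Rn n) {L : ℝ} (hL : 0 < L) :
    cube n z L ⊆ ball z (Real.sqrt n * L) := by
  intro x hx
  rw [mem_ball, EuclideanSpace.dist_eq]
  have hbound : ∑ i, dist (x i) (z i) ^ 2 ≤ (n : ℝ) * (L / 2) ^ 2 := by
    calc ∑ i, dist (x i) (z i) ^ 2 ≤ ∑ _i : Fin n, (L / 2) ^ 2 := by
          refine Finset.sum_le_sum fun i _ => ?_
          have := hx i
          rw [Real.dist_eq]
          nlinarith [abs_nonneg (x i - z i), le_abs_self (x i - z i),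
            neg_abs_le (x i - z i)]
      _ = (n : ℝ) * (L / 2) ^ 2 := by
          rw [Finset.sum_const, Finset.card_univ, Fintype.card_fin, nsmul_eq_mul]
  have hsqrtn : 0 < Real.sqrt n := Real.sqrt_pos.2 (by exact_mod_cast hn)
  calc Real.sqrt (∑ i, dist (x i) (z i) ^ 2) ≤ Real.sqrt ((n : ℝ) * (L / 2) ^ 2) :=
        Real.sqrt_le_sqrt hbound
    _ = Real.sqrt n * (L / 2) := by
        rw [Real.sqrt_mul (by positivity), Real.sqrt_sq (by positivity)]
    _ < Real.sqrt n * L := by nlinarith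

set_option maxHeartbeats 2000000 in
/-- For `f ∈ L¹(ℝⁿ)` supported in `2Q`:
`∫_Q |I_α f| dH^{n-α+ε}_∞ ≤ C ℓ(Q)^{n-α+ε} M_α f(x₀)` with `C = C(n, α, ε)`. -/
theorem stmt12 (n : ℕ) (α ε : ℝ) (hα0 : 0 < α) (hαn : α < n) (hε0 : 0 < ε) (hεα : ε ≤ α) :
    ∃ C : ℝ, 0 < C ∧ ∀ (x₀ : Rn n) (l : ℝ), 0 < l →
      ∀ f : Rn n → ℝ, Integrable f volume →
        Function.support f ⊆ cube n x₀ (2 * l) →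
        choquet n ((n : ℝ) - α + ε) (cube n x₀ l) (fun x => |riesz n α f x|)
          ≤ ENNReal.ofReal (C * l ^ ((n : ℝ) - α + ε)) * fracMax n α f x₀ := by
  have hn0 : (0 : ℝ) < (n : ℝ) := lt_trans hα0 hαn
  have hnn : 0 < n := by exact_mod_cast hn0
  set ν : ℝ := (n : ℝ) - α with hν
  have hν0 : 0 < ν := by rw [hν]; linarith
  set β : ℝ := (n : ℝ) - α + ε with hβ
  have hβ0 : 0 < β := by rw [hβ]; linarith
  have hβν : β = ν + ε := by rw [hβ, hν]
  set γ : ℝ := rieszConst n α with hγdef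
  have hγ : 0 < γ := rieszConst_pos hα0 hαn
  have h2e1 : (2 : ℝ)⁻¹ ^ ε < 1 := Real.rpow_lt_one (by norm_num) (by norm_num) hε0
  have h2e0 : (0 : ℝ) < 1 - (2 : ℝ)⁻¹ ^ ε := by linarith
  set A₁ : ℝ := γ⁻¹ * (2 ^ ((n : ℝ) - α) * (1 - (2 : ℝ)⁻¹ ^ ε)⁻¹) with hA₁
  have hA₁0 : 0 < A₁ := mul_pos (inv_pos.2 hγ)
    (mul_pos (Real.rpow_pos_of_pos two_pos _) (inv_pos.2 h2e0))
  set W : ℝ := hconst β * 5 ^ β with hW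
  have hW0 : 0 < W := mul_pos (hconst_pos hβ0) (Real.rpow_pos_of_pos (by norm_num) _)
  set q : ℝ := β / ν with hq
  have hq1 : q - 1 = ε / ν := by rw [hq, hβν]; field_simp; ring
  have hq1' : 1 < q := by
    have : 0 < ε / ν := div_pos hε0 hν0
    linarith [hq1]
  obtain ⟨κ, hκ⟩ : ∃ κ : ℝ, κ = ε / ν := ⟨_, rfl⟩
  have hκ0 : 0 < κ := by rw [hκ]; exact div_pos hε0 hν0
  have hqκ : q - 1 = κ := by rw [hκ]; exact hq1
  have hsq : 0 < Real.sqrt n := Real.sqrt_pos.2 hn0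
  set Ch : ℝ := hconst β * Real.sqrt n ^ β with hCh
  have hCh0 : 0 < Ch := mul_pos (hconst_pos hβ0) (Real.rpow_pos_of_pos hsq _)
  set Ct : ℝ := W * 4 * A₁ * (2 * γ⁻¹) ^ κ * (q - 1)⁻¹ with hCt
  have h2γ : (0 : ℝ) < 2 * γ⁻¹ := mul_pos two_pos (inv_pos.2 hγ)
  have hCt0 : 0 < Ct :=
    mul_pos (mul_pos (mul_pos (mul_pos hW0 (by norm_num)) hA₁0)
      (Real.rpow_pos_of_pos h2γ _)) (inv_pos.2 (by linarith))
  set C : ℝ := (Ch + Ct) * (2 * Real.sqrt n) ^ ν with hC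
  have hC0 : 0 < C := mul_pos (by linarith) (Real.rpow_pos_of_pos (by linarith) _)
  clear_value ν β γ A₁ W q Ch Ct C
  refine ⟨C, hC0, ?_⟩
  intro x₀ l hl f hfint hsupp
  set M : ℝ≥0∞ := fracMax n α f x₀ with hM
  set Ftot : ℝ≥0∞ := ∫⁻ y, ENNReal.ofReal |f y| with hFtotdef
  have hFeq : Ftot = ∫⁻ y, (‖f y‖₊ : ℝ≥0∞) :=
    lintegral_congr fun y => by rw [← Real.norm_eq_abs, ofReal_norm]; rfl
  have hFne : Ftot ≠ ⊤ := by rw [hFeq]; exact hfint.2.ne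
  by_cases hF0 : Ftot = 0
  · -- degenerate case `f = 0` a.e.
    have hf0 : ∀ᵐ y ∂(volume : Measure (Rn n)), f y = 0 := by
      have h1 : (fun y => (‖f y‖₊ : ℝ≥0∞)) =ᵐ[(volume : Measure (Rn n))] 0 :=
        (lintegral_eq_zero_iff' hfint.aestronglyMeasurable.enorm).1
          (by exact (hFeq ▸ hF0 : ∫⁻ y, (‖f y‖₊ : ℝ≥0∞) = 0))
      filter_upwards [h1] with y hy
      simpa using hy
    have hr0 : ∀ x, riesz n α f x = 0 := by
      intro x
      rw [riesz]
      have h2 : ∫ y, f y / ‖x - y‖ ^ ((n : ℝ) - α) = 0 := by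
        rw [integral_congr_ae (g := fun _ => (0 : ℝ))
          (by filter_upwards [hf0] with y hy; rw [hy, zero_div]), integral_zero]
      rw [h2, mul_zero]
    rw [choquet]
    calc ∫⁻ t in Ioi (0 : ℝ), hContent n β {x | x ∈ cube n x₀ l ∧ t < |riesz n α f x|}
        ≤ ∫⁻ _t in Ioi (0 : ℝ), 0 := by
          refine setLIntegral_mono' measurableSet_Ioi fun t ht => ?_
          have hset : {x | x ∈ cube n x₀ l ∧ t < |riesz n α f x|} = (∅ : Set (Rn n)) := by
            ext x
            simp only [mem_setOf_eq, mem_empty_iff_false, iff_false, not_and, not_lt]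
            intro _
            rw [hr0 x, abs_zero]
            exact (mem_Ioi.1 ht).le
          rw [hset, hContent_empty hβ0]
      _ = 0 := lintegral_zero
      _ ≤ _ := zero_le
  · -- main case
    have hFr0 : 0 < Ftot.toReal := ENNReal.toReal_pos hF0 hFne
    set Fr : ℝ := Ftot.toReal with hFr
    have hFrF : ENNReal.ofReal Fr = Ftot := ENNReal.ofReal_toReal hFne
    clear_value Fr
    have hsupp2 : Function.support (fun y => ENNReal.ofReal |f y|)
        ⊆ ball x₀ (Real.sqrt n * (2 * l)) := by
      intro y hy
      refine cube_subset_ball hnn x₀ (by linarith) (hsupp ?_)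
      simp only [Function.mem_support, ne_eq, ENNReal.ofReal_eq_zero, not_le] at hy
      simp only [Function.mem_support, ne_eq]
      intro h0
      rw [h0, abs_zero] at hy
      exact lt_irrefl _ hy
    have hFtotle : Ftot ≤ ENNReal.ofReal ((Real.sqrt n * (2 * l)) ^ ν) * M := by
      rw [hFtotdef, ← setLIntegral_eq_of_support_subset hsupp2, hν]
      exact lintegral_ball_le_fracMax α f x₀ (mul_pos hsq (by linarith))
    have hpoint : ∀ (x : Rn n) (δ : ℝ), 0 < δ →
        ENNReal.ofReal |riesz n α f x|
          ≤ ENNReal.ofReal (A₁ * δ ^ ε) * fracMax n (α - ε) f x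
            + ENNReal.ofReal (γ⁻¹ * δ ^ (α - (n : ℝ)) * Fr) := by
      intro x δ hδ
      refine le_trans (riesz_pointwise hα0 hαn f x) ?_
      refine le_trans (mul_le_mul_right (hedberg hα0 hαn hε0 hεα f x hδ) _) ?_
      rw [← hγdef, mul_add]
      apply add_le_add
      · rw [← mul_assoc, ← ENNReal.ofReal_mul (inv_pos.2 hγ).le]
        refine mul_le_mul_left (ENNReal.ofReal_le_ofReal (le_of_eq ?_)) _
        rw [hA₁]; ring
      · rw [← mul_assoc, ← ENNReal.ofReal_mul (inv_pos.2 hγ).le, ← hFtotdef, ← hFrF,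
          ← ENNReal.ofReal_mul
            (mul_nonneg (inv_pos.2 hγ).le (Real.rpow_nonneg hδ.le _))]
    set T : ℝ := Fr * l ^ (-ν) with hT
    have hT0 : 0 < T := mul_pos hFr0 (Real.rpow_pos_of_pos hl _)
    clear_value T
    have hQball : cube n x₀ l ⊆ ball x₀ (Real.sqrt n * l) := cube_subset_ball hnn x₀ hl
    have head : ∫⁻ t in Ioc (0 : ℝ) T,
        hContent n β {x | x ∈ cube n x₀ l ∧ t < |riesz n α f x|}
        ≤ ENNReal.ofReal (Ch * Fr * l ^ ε) := by
      calc ∫⁻ t in Ioc (0 : ℝ) T, hContent n β {x | x ∈ cube n x₀ l ∧ t < |riesz n α f x|}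
          ≤ ∫⁻ _t in Ioc (0 : ℝ) T,
              ENNReal.ofReal (hconst β * (Real.sqrt n * l) ^ β) :=
            setLIntegral_mono' measurableSet_Ioc fun t _ =>
              hContent_le_ball hβ0 (mul_nonneg hsq.le hl.le) (fun x hx => hQball hx.1)
        _ = ENNReal.ofReal (hconst β * (Real.sqrt n * l) ^ β) * ENNReal.ofReal T := by
            rw [setLIntegral_const, Real.volume_Ioc, sub_zero]
        _ = ENNReal.ofReal (hconst β * (Real.sqrt n * l) ^ β * T) :=
            (ENNReal.ofReal_mul
              (mul_nonneg (hconst_pos hβ0).le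
                (Real.rpow_nonneg (mul_nonneg hsq.le hl.le) _))).symm
        _ = ENNReal.ofReal (Ch * Fr * l ^ ε) := by
            congr 1
            have hll : l ^ β * l ^ (-ν) = l ^ ε := by
              rw [← Real.rpow_add hl]
              congr 1
              rw [hβν]; ring
            rw [Real.mul_rpow hsq.le hl.le, hCh, hT]
            linear_combination (hconst β * Real.sqrt n ^ β * Fr) * hll
    have tail : ∫⁻ t in Ioi T,
        hContent n β {x | x ∈ cube n x₀ l ∧ t < |riesz n α f x|}
        ≤ ENNReal.ofReal (Ct * Fr * l ^ ε) := by
      set a : ℝ := 2 * γ⁻¹ * Fr with ha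
      have ha0 : 0 < a := mul_pos h2γ hFr0
      clear_value a
      set D : ℝ := W * 4 * A₁ * a ^ κ * Fr with hD
      have hD0 : 0 < D := mul_pos (mul_pos (mul_pos (mul_pos hW0 (by norm_num)) hA₁0)
        (Real.rpow_pos_of_pos ha0 _)) hFr0
      clear_value D
      have htb : ∀ t ∈ Ioi T, hContent n β {x | x ∈ cube n x₀ l ∧ t < |riesz n α f x|}
          ≤ ENNReal.ofReal D * ENNReal.ofReal (t ^ (-q)) := by
        intro t ht
        have ht0 : 0 < t := lt_trans hT0 (mem_Ioi.1 ht)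
        set δt : ℝ := (a / t) ^ ν⁻¹ with hδt
        have hat0 : 0 < a / t := div_pos ha0 ht0
        have hδt0 : 0 < δt := Real.rpow_pos_of_pos hat0 _
        have hδte0 : 0 < δt ^ ε := Real.rpow_pos_of_pos hδt0 _
        have hAδ0 : 0 < A₁ * δt ^ ε := mul_pos hA₁0 hδte0
        have hfar : γ⁻¹ * δt ^ (α - (n : ℝ)) * Fr = t / 2 := by
          have h1 : δt ^ (α - (n : ℝ)) = (a / t)⁻¹ := by
            rw [hδt, ← Real.rpow_mul hat0.le,
              show ν⁻¹ * (α - (n : ℝ)) = -1 from by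
                rw [show α - (n : ℝ) = -ν from by rw [hν]; ring, mul_neg,
                  inv_mul_cancel₀ hν0.ne'],
              Real.rpow_neg_one]
          rw [h1, ha, inv_div]
          field_simp
        set st : ℝ := t / (4 * (A₁ * δt ^ ε)) with hst
        have hst0 : 0 < st := div_pos ht0 (mul_pos (by norm_num) hAδ0)
        clear_value st
        have hsubset : {x | x ∈ cube n x₀ l ∧ t < |riesz n α f x|}
            ⊆ {x | ENNReal.ofReal st < fracMax n (α - ε) f x} := by
          intro x hx
          have h3 : ENNReal.ofReal t
              ≤ ENNReal.ofReal (A₁ * δt ^ ε) * fracMax n (α - ε) f x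
                + ENNReal.ofReal (t / 2) := by
            rw [← hfar]
            exact le_trans (ENNReal.ofReal_le_ofReal hx.2.le) (hpoint x δt hδt0)
          have h4 : ENNReal.ofReal (t / 2)
              ≤ ENNReal.ofReal (A₁ * δt ^ ε) * fracMax n (α - ε) f x := by
            have h5 : ENNReal.ofReal (t / 2) + ENNReal.ofReal (t / 2)
                ≤ ENNReal.ofReal (A₁ * δt ^ ε) * fracMax n (α - ε) f x
                  + ENNReal.ofReal (t / 2) := by
              calc ENNReal.ofReal (t / 2) + ENNReal.ofReal (t / 2)
                  = ENNReal.ofReal t := by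
                    rw [← ENNReal.ofReal_add (by linarith) (by linarith)]
                    congr 1; ring
                _ ≤ _ := h3
            exact (ENNReal.add_le_add_iff_right ENNReal.ofReal_ne_top).1 h5
          have h7 : ENNReal.ofReal ((A₁ * δt ^ ε)⁻¹ * (t / 2))
              ≤ fracMax n (α - ε) f x := by
            have hc0 : ENNReal.ofReal (A₁ * δt ^ ε) ≠ 0 := by
              simp only [ne_eq, ENNReal.ofReal_eq_zero, not_le]
              exact hAδ0
            calc ENNReal.ofReal ((A₁ * δt ^ ε)⁻¹ * (t / 2))
                = (ENNReal.ofReal (A₁ * δt ^ ε))⁻¹ * ENNReal.ofReal (t / 2) := by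
                  rw [ENNReal.ofReal_mul (inv_nonneg.2 hAδ0.le),
                    ENNReal.ofReal_inv_of_pos hAδ0]
              _ ≤ (ENNReal.ofReal (A₁ * δt ^ ε))⁻¹
                    * (ENNReal.ofReal (A₁ * δt ^ ε) * fracMax n (α - ε) f x) :=
                  mul_le_mul_right h4 _
              _ = fracMax n (α - ε) f x := by
                  rw [← mul_assoc, ENNReal.inv_mul_cancel hc0 ENNReal.ofReal_ne_top,
                    one_mul]
          have hlt : st < (A₁ * δt ^ ε)⁻¹ * (t / 2) := by
            have he : (A₁ * δt ^ ε)⁻¹ * (t / 2) = t / (2 * (A₁ * δt ^ ε)) := by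
              field_simp
            rw [hst, he]
            exact div_lt_div_of_pos_left ht0 (mul_pos two_pos hAδ0)
              (by linarith [hAδ0])
          exact lt_of_lt_of_le
            ((ENNReal.ofReal_lt_ofReal_iff
              (mul_pos (inv_pos.2 hAδ0) (by linarith : (0:ℝ) < t / 2))).2 hlt) h7
        have hwt := weakType (η := α - ε) (by linarith) (by linarith) f
          (by rw [← hFtotdef]; exact hFne) hst0
        rw [show (n : ℝ) - (α - ε) = β from by rw [hβ]; ring] at hwt
        refine le_trans (hContent_mono hsubset) (le_trans hwt ?_)
        have heq1 : ENNReal.ofReal (hconst β * 5 ^ β) * (ENNReal.ofReal st)⁻¹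
              * (∫⁻ y, ENNReal.ofReal |f y|)
            = ENNReal.ofReal (W * st⁻¹ * Fr) := by
          rw [← hFtotdef, ← hFrF, ← ENNReal.ofReal_inv_of_pos hst0, ← hW,
            ← ENNReal.ofReal_mul hW0.le,
            ← ENNReal.ofReal_mul (mul_nonneg hW0.le (inv_nonneg.2 hst0.le))]
        rw [heq1, ← ENNReal.ofReal_mul hD0.le]
        refine ENNReal.ofReal_le_ofReal (le_of_eq ?_)
        have e1 : δt ^ ε = a ^ κ * (t ^ κ)⁻¹ := by
          rw [hδt, ← Real.rpow_mul hat0.le,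
            show ν⁻¹ * ε = κ from by rw [hκ]; exact (div_eq_inv_mul ε ν).symm,
            Real.div_rpow ha0.le ht0.le, div_eq_mul_inv]
        have e2 : st⁻¹ = 4 * A₁ * δt ^ ε * t⁻¹ := by
          rw [hst, inv_div, div_eq_mul_inv]; ring
        have e3 : t ^ (-q) = (t ^ κ)⁻¹ * t⁻¹ := by
          rw [show -q = -κ + -1 from by rw [← hqκ]; ring, Real.rpow_add ht0,
            Real.rpow_neg_one, Real.rpow_neg ht0.le]
        rw [e2, e1, e3, hD]
        ring
      calc ∫⁻ t in Ioi T, hContent n β {x | x ∈ cube n x₀ l ∧ t < |riesz n α f x|}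
          ≤ ∫⁻ t in Ioi T, ENNReal.ofReal D * ENNReal.ofReal (t ^ (-q)) :=
            setLIntegral_mono' measurableSet_Ioi htb
        _ = ENNReal.ofReal D * ∫⁻ t in Ioi T, ENNReal.ofReal (t ^ (-q)) :=
            lintegral_const_mul' _ _ ENNReal.ofReal_ne_top
        _ = ENNReal.ofReal D * ENNReal.ofReal (T ^ (-q + 1) / (-(-q + 1))) := by
            rw [lintegral_Ioi_ofReal_rpow (by linarith) hT0]
        _ ≤ ENNReal.ofReal (Ct * Fr * l ^ ε) := by
            rw [← ENNReal.ofReal_mul hD0.le]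
            refine ENNReal.ofReal_le_ofReal (le_of_eq ?_)
            have e4 : T ^ (-q + 1) = Fr ^ (-q + 1) * l ^ ε := by
              rw [hT, Real.mul_rpow hFr0.le (Real.rpow_nonneg hl.le _),
                ← Real.rpow_mul hl.le,
                show -ν * (-q + 1) = ε from by
                  rw [show -ν * (-q + 1) = ν * (q - 1) from by ring, hq1, mul_comm,
                    div_mul_cancel₀ _ hν0.ne']]
            have e5 : Fr ^ κ * Fr ^ (-q + 1) = 1 := by
              rw [← Real.rpow_add hFr0,
                show κ + (-q + 1) = 0 from by rw [← hqκ]; ring, Real.rpow_zero]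
            have e6 : a ^ κ = (2 * γ⁻¹) ^ κ * Fr ^ κ := by
              rw [ha, Real.mul_rpow h2γ.le hFr0.le]
            rw [hD, e6, e4, hCt, show -(-q + 1) = q - 1 from by ring, div_eq_mul_inv]
            linear_combination
              (W * 4 * A₁ * (2 * γ⁻¹) ^ κ * l ^ ε * (q - 1)⁻¹ * Fr) * e5
    rw [choquet]
    calc ∫⁻ t in Ioi (0 : ℝ), hContent n β {x | x ∈ cube n x₀ l ∧ t < |riesz n α f x|}
        ≤ (∫⁻ t in Ioc (0 : ℝ) T, hContent n β {x | x ∈ cube n x₀ l ∧ t < |riesz n α f x|})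
          + ∫⁻ t in Ioi T, hContent n β {x | x ∈ cube n x₀ l ∧ t < |riesz n α f x|} := by
          rw [← Ioc_union_Ioi_eq_Ioi hT0.le]
          exact lintegral_union_le _ _ _
      _ ≤ ENNReal.ofReal (Ch * Fr * l ^ ε) + ENNReal.ofReal (Ct * Fr * l ^ ε) :=
          add_le_add head tail
      _ = ENNReal.ofReal ((Ch + Ct) * l ^ ε) * ENNReal.ofReal Fr := by
          rw [← ENNReal.ofReal_add
              (mul_nonneg (mul_nonneg hCh0.le hFr0.le) (Real.rpow_nonneg hl.le _))
              (mul_nonneg (mul_nonneg hCt0.le hFr0.le) (Real.rpow_nonneg hl.le _)),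
            ← ENNReal.ofReal_mul
              (mul_nonneg (by linarith) (Real.rpow_nonneg hl.le _))]
          congr 1; ring
      _ ≤ ENNReal.ofReal ((Ch + Ct) * l ^ ε)
            * (ENNReal.ofReal ((Real.sqrt n * (2 * l)) ^ ν) * M) := by
          refine mul_le_mul_right ?_ _
          rw [hFrF]; exact hFtotle
      _ = ENNReal.ofReal (C * l ^ β) * M := by
          rw [← mul_assoc, ← ENNReal.ofReal_mul
            (mul_nonneg (by linarith) (Real.rpow_nonneg hl.le _))]
          congr 2
          have e7 : l ^ ε * l ^ ν = l ^ β := by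
            rw [← Real.rpow_add hl]
            congr 1
            rw [hβν]; ring
          rw [show Real.sqrt n * (2 * l) = 2 * Real.sqrt n * l from by ring,
            Real.mul_rpow (by positivity) hl.le, hC]
          linear_combination ((Ch + Ct) * (2 * Real.sqrt n) ^ ν) * e7
end
end

section
/- Let n ∈ ℕ, 0 < α < n, and β ∈ (0, n]. Let Q ⊆ ℝⁿ be an open cube with center x₀, and let f : ℝⁿ → ℝ be measurable with ‖f‖_{M^α_1(ℝⁿ)} < ∞, supp f ⊆ ℝⁿ ∖ 2Q (where 2Q is the cube with the same center and twice the side length), and I_α f ∈ L¹_loc(ℝⁿ). Then I_α f is continuous on Q, and there exist a constant c ∈ ℝ (depending on Q) and a constant C > 0 depending only on n, α, β such that ∫_Q |I_α f − c| dH^β_∞ ≤ C ℓ(Q)^β M_α f(x₀). -/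
open MeasureTheory Filter Set Metric ENNReal

noncomputable section

lemma apply_le_norm {n : ℕ} (v : Rn n) (i : Fin n) : |v i| ≤ ‖v‖ := by
  have h := EuclideanSpace.norm_eq v
  rw [h]
  have : |v i| = Real.sqrt (‖v i‖^2) := by
    rw [Real.sqrt_sq_eq_abs]; simp
  rw [this]
  apply Real.sqrt_le_sqrt
  exact Finset.single_le_sum (f := fun j => ‖v j‖^2) (fun j _ => sq_nonneg _) (Finset.mem_univ i)

lemma norm_le_sqrt_mul {n : ℕ} (v : Rn n) (m : ℝ) (hm : 0 ≤ m) (h : ∀ i, |v i| ≤ m) :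
    ‖v‖ ≤ Real.sqrt n * m := by
  rw [EuclideanSpace.norm_eq]
  have : ∑ i, ‖v i‖^2 ≤ n * m^2 := by
    calc ∑ i, ‖v i‖^2 ≤ ∑ _i : Fin n, m^2 := by
          apply Finset.sum_le_sum; intro i _
          have := h i
          rw [Real.norm_eq_abs]
          nlinarith [abs_nonneg (v i), sq_abs (v i)]
      _ = n * m^2 := by simp [Finset.sum_const, nsmul_eq_mul]
  calc Real.sqrt (∑ i, ‖v i‖^2) ≤ Real.sqrt (n * m^2) := Real.sqrt_le_sqrt this
    _ = Real.sqrt n * m := by rw [Real.sqrt_mul (by positivity), Real.sqrt_sq hm]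

lemma rpow_neg_diff_le' {p a b m : ℝ} (hp : 0 < p) (hm : 0 < m) (ha : m ≤ a) (hb : m ≤ b)
    (hab : a ≤ b) : |a ^ (-p) - b ^ (-p)| ≤ p * |a - b| * m ^ (-p - 1) := by
  have ha0 : 0 < a := hm.trans_le ha
  have hb0 : 0 < b := hm.trans_le hb
  have hint : ∫ t in a..b, t ^ (-p - 1) = (b ^ (-p) - a ^ (-p)) / (-p) := by
    rw [integral_rpow (Or.inr ⟨by linarith, fun h => by
      rcases Set.mem_uIcc.mp h with ⟨h1, _⟩ | ⟨h1, _⟩ <;> linarith⟩)]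
    ring_nf
  have hbound : ‖∫ t in a..b, t ^ (-p - 1)‖ ≤ m ^ (-p - 1) * |b - a| := by
    apply intervalIntegral.norm_integral_le_of_norm_le_const
    intro x hx
    rw [Set.uIoc_of_le hab] at hx
    rw [Real.norm_eq_abs, abs_of_nonneg (Real.rpow_nonneg (by linarith [hx.1]) _)]
    exact Real.rpow_le_rpow_of_nonpos hm (ha.trans hx.1.le) (by linarith)
  have key : a ^ (-p) - b ^ (-p) = p * ∫ t in a..b, t ^ (-p - 1) := by
    rw [hint, div_neg, mul_neg, mul_div_assoc', mul_div_cancel_left₀ _ hp.ne', neg_sub]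
  calc |a ^ (-p) - b ^ (-p)| = p * ‖∫ t in a..b, t ^ (-p - 1)‖ := by
        rw [key, abs_mul, abs_of_pos hp, Real.norm_eq_abs]
    _ ≤ p * (m ^ (-p - 1) * |b - a|) := mul_le_mul_of_nonneg_left hbound hp.le
    _ = p * |a - b| * m ^ (-p - 1) := by rw [abs_sub_comm]; ring

lemma rpow_neg_diff_le {p a b m : ℝ} (hp : 0 < p) (hm : 0 < m) (ha : m ≤ a) (hb : m ≤ b) :
    |a ^ (-p) - b ^ (-p)| ≤ p * |a - b| * m ^ (-p - 1) := by
  rcases le_total a b with h | h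
  · exact rpow_neg_diff_le' hp hm ha hb h
  · rw [abs_sub_comm, abs_sub_comm a b]
    exact rpow_neg_diff_le' hp hm hb ha h

lemma cube_open (n : ℕ) (z : Rn n) (l : ℝ) : IsOpen (cube n z l) := by
  have : cube n z l = ⋂ i, {x : Rn n | |x i - z i| < l / 2} := by
    ext x; simp [cube, Set.mem_iInter]
  rw [this]
  apply isOpen_iInter_of_finite
  intro i
  have hc : Continuous fun x : Rn n => |x i - z i| :=
    ((continuous_apply i).comp (PiLp.continuous_ofLp 2 _)).sub continuous_const |>.abs
  exact isOpen_lt hc continuous_const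

lemma geom {n : ℕ} {x₀ x y : Rn n} {l : ℝ} (hl : 0 < l) (hx : x ∈ cube n x₀ l)
    (hy : y ∉ cube n x₀ (2 * l)) :
    l / 2 ≤ ‖x - y‖ ∧ l ≤ ‖x₀ - y‖ ∧ ‖x₀ - y‖ ≤ (1 + Real.sqrt n) * ‖x - y‖ := by
  simp only [cube, Set.mem_setOf_eq, not_forall, not_lt] at hy
  obtain ⟨i, hi⟩ := hy
  have hi' : l ≤ |y i - x₀ i| := by linarith [hi]
  have hxi := hx i
  have h1 : l / 2 ≤ ‖x - y‖ := by
    have := apply_le_norm (x - y) i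
    have hsub : (x - y) i = x i - y i := rfl
    rw [hsub] at this
    have : |y i - x₀ i| - |x i - x₀ i| ≤ |x i - y i| := by
      have := abs_sub_abs_le_abs_sub (y i - x₀ i) (x i - x₀ i)
      rw [show y i - x₀ i - (x i - x₀ i) = -(x i - y i) by ring, abs_neg] at this
      linarith
    calc l / 2 ≤ |x i - y i| := by linarith
      _ ≤ ‖x - y‖ := by rw [← hsub] at *; exact apply_le_norm (x - y) i
  have h2 : l ≤ ‖x₀ - y‖ := by
    have h := apply_le_norm (x₀ - y) i
    have hsub : (x₀ - y) i = x₀ i - y i := rfl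
    rw [hsub, abs_sub_comm] at h
    linarith
  have hxx0 : ‖x - x₀‖ ≤ Real.sqrt n * (l / 2) := by
    apply norm_le_sqrt_mul _ _ (by linarith) (fun j => (hx j).le)
  refine ⟨h1, h2, ?_⟩
  have : ‖x₀ - y‖ ≤ ‖x₀ - x‖ + ‖x - y‖ := norm_sub_le_norm_sub_add_norm_sub _ _ _
  have hsn : (0:ℝ) ≤ Real.sqrt n := Real.sqrt_nonneg _
  have : ‖x₀ - x‖ ≤ Real.sqrt n * ‖x - y‖ := by
    rw [norm_sub_rev]
    calc ‖x - x₀‖ ≤ Real.sqrt n * (l / 2) := hxx0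
      _ ≤ Real.sqrt n * ‖x - y‖ := by nlinarith
  nlinarith [norm_sub_le_norm_sub_add_norm_sub x₀ x y]

lemma ball_int_le {n : ℕ} {α : ℝ} (hαn : α < n) (f : Rn n → ℝ) (x₀ : Rn n) {r : ℝ} (hr : 0 < r) :
    ∫⁻ y in Metric.ball x₀ r, ENNReal.ofReal |f y|
      ≤ ENNReal.ofReal (r ^ ((n : ℝ) - α)) * fracMax n α f x₀ := by
  set I := ∫⁻ y in Metric.ball x₀ r, ENNReal.ofReal |f y| with hI
  have h1 : ENNReal.ofReal (r ^ (α - (n : ℝ))) * I ≤ fracMax n α f x₀ := by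
    refine le_trans ?_ (le_iSup _ r)
    exact le_iSup_of_le hr le_rfl
  have hprod : ENNReal.ofReal (r ^ ((n : ℝ) - α)) * ENNReal.ofReal (r ^ (α - (n : ℝ))) = 1 := by
    rw [← ENNReal.ofReal_mul (Real.rpow_nonneg hr.le _), ← Real.rpow_add hr]
    norm_num
  calc I = (ENNReal.ofReal (r ^ ((n : ℝ) - α)) * ENNReal.ofReal (r ^ (α - (n : ℝ)))) * I := by
        rw [hprod, one_mul]
    _ = ENNReal.ofReal (r ^ ((n : ℝ) - α)) * (ENNReal.ofReal (r ^ (α - (n : ℝ))) * I) := by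
        rw [mul_assoc]
    _ ≤ ENNReal.ofReal (r ^ ((n : ℝ) - α)) * fracMax n α f x₀ :=
        mul_le_mul_right h1 _

lemma tail_bound {n : ℕ} {α : ℝ} (hαn : α < n) {f : Rn n → ℝ} (hf : Measurable f)
    (x₀ : Rn n) {l : ℝ} (hl : 0 < l) :
    ∫⁻ y in {y : Rn n | l ≤ dist x₀ y},
        ENNReal.ofReal |f y| * ENNReal.ofReal (dist x₀ y ^ (α - (n : ℝ) - 1))
      ≤ ENNReal.ofReal (2 ^ ((n : ℝ) - α + 1) / l) * fracMax n α f x₀ := by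
  set g : Rn n → ℝ≥0∞ := fun y => ENNReal.ofReal |f y| * ENNReal.ofReal (dist x₀ y ^ (α - (n : ℝ) - 1)) with hg
  set A : ℕ → Set (Rn n) := fun k => Metric.ball x₀ (2 ^ (k + 1) * l) \ Metric.ball x₀ (2 ^ k * l) with hA
  have hcover : {y : Rn n | l ≤ dist x₀ y} ⊆ ⋃ k, A k := by
    intro y hy
    simp only [Set.mem_setOf_eq] at hy
    have hne : ∃ k : ℕ, dist x₀ y < 2 ^ (k + 1) * l := by
      obtain ⟨m, hm⟩ := pow_unbounded_of_one_lt (dist x₀ y / l) (one_lt_two (α := ℝ))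
      exact ⟨m, by rw [div_lt_iff₀ hl] at hm; calc dist x₀ y < 2 ^ m * l := hm
        _ ≤ 2 ^ (m + 1) * l := by
            have : (2:ℝ) ^ m ≤ 2 ^ (m+1) := by
              apply pow_le_pow_right₀ (by norm_num) (by omega)
            nlinarith⟩
    classical
    set k := Nat.find hne with hkdef
    have hk : dist x₀ y < 2 ^ (k + 1) * l := Nat.find_spec hne
    have hlow : 2 ^ k * l ≤ dist x₀ y := by
      rcases Nat.eq_zero_or_pos k with h0 | hpos
      · rw [h0]; simpa using hy
      · have := Nat.find_min hne (m := k - 1) (by omega)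
        push_neg at this
        have hk1 : k - 1 + 1 = k := by omega
        rwa [hk1] at this
    refine Set.mem_iUnion.mpr ⟨k, ?_⟩
    simp only [hA, Set.mem_diff, Metric.mem_ball, dist_comm y x₀]
    exact ⟨hk, not_lt.mpr hlow⟩
  have hterm : ∀ k : ℕ, ∫⁻ y in A k, g y
      ≤ ENNReal.ofReal (2 ^ ((n:ℝ) - α) / l * (2⁻¹) ^ k) * fracMax n α f x₀ := by
    intro k
    have hrk : (0:ℝ) < 2 ^ k * l := by positivity
    have hstep1 : ∫⁻ y in A k, g y
        ≤ ENNReal.ofReal ((2 ^ k * l) ^ (α - (n:ℝ) - 1)) * ∫⁻ y in A k, ENNReal.ofReal |f y| := by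
      rw [← lintegral_const_mul' _ _ ENNReal.ofReal_ne_top]
      apply setLIntegral_mono (by fun_prop)
      intro y hy
      simp only [hA, Set.mem_diff, Metric.mem_ball, not_lt, dist_comm y x₀] at hy
      simp only [hg]
      rw [mul_comm]
      exact mul_le_mul_left (ENNReal.ofReal_le_ofReal
        (Real.rpow_le_rpow_of_nonpos hrk hy.2 (by push_cast; linarith))) _
    have hstep2 : ∫⁻ y in A k, ENNReal.ofReal |f y|
        ≤ ENNReal.ofReal ((2 ^ (k+1) * l) ^ ((n:ℝ) - α)) * fracMax n α f x₀ := by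
      refine le_trans (lintegral_mono_set Set.diff_subset) ?_
      exact ball_int_le hαn f x₀ (by positivity)
    calc ∫⁻ y in A k, g y ≤ ENNReal.ofReal ((2 ^ k * l) ^ (α - (n:ℝ) - 1)) *
          (ENNReal.ofReal ((2 ^ (k+1) * l) ^ ((n:ℝ) - α)) * fracMax n α f x₀) :=
          le_trans hstep1 (mul_le_mul_right hstep2 _)
      _ = ENNReal.ofReal ((2 ^ k * l) ^ (α - (n:ℝ) - 1) * (2 ^ (k+1) * l) ^ ((n:ℝ) - α)) *
          fracMax n α f x₀ := by
          rw [← mul_assoc, ← ENNReal.ofReal_mul (Real.rpow_nonneg hrk.le _)]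
      _ = ENNReal.ofReal (2 ^ ((n:ℝ) - α) / l * (2⁻¹) ^ k) * fracMax n α f x₀ := by
          congr 1
          have key : (2 ^ k * l) ^ (α - (n:ℝ) - 1) * (2 ^ (k+1) * l) ^ ((n:ℝ) - α)
              = 2 ^ ((n:ℝ) - α) / l * (2⁻¹) ^ k := by
            have h2k : ((2:ℝ) ^ (k+1) * l) = 2 * (2 ^ k * l) := by ring
            have hexp : α - (n:ℝ) - 1 + ((n:ℝ) - α) = -1 := by ring
            rw [h2k, Real.mul_rpow (by norm_num) hrk.le,
              mul_comm ((2:ℝ) ^ ((n:ℝ) - α)) ((2 ^ k * l) ^ ((n:ℝ) - α)), ← mul_assoc,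
              ← Real.rpow_add hrk, hexp, Real.rpow_neg_one, mul_inv, ← inv_pow]
            ring
          rw [key]
  have hsum : ∑' k : ℕ, ENNReal.ofReal (2 ^ ((n:ℝ) - α) / l * (2⁻¹) ^ k)
      = ENNReal.ofReal (2 ^ ((n:ℝ) - α + 1) / l) := by
    have hC : (0:ℝ) ≤ 2 ^ ((n:ℝ) - α) / l := by positivity
    have h1 : ∀ k : ℕ, ENNReal.ofReal (2 ^ ((n:ℝ) - α) / l * (2⁻¹:ℝ) ^ k)
        = ENNReal.ofReal (2 ^ ((n:ℝ) - α) / l) * (2⁻¹ : ℝ≥0∞) ^ k := by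
      intro k
      rw [ENNReal.ofReal_mul hC, ENNReal.ofReal_pow (by norm_num),
        ENNReal.ofReal_inv_of_pos (by norm_num), ENNReal.ofReal_ofNat]
    simp_rw [h1]
    rw [ENNReal.tsum_mul_left, ENNReal.tsum_geometric, ENNReal.one_sub_inv_two, inv_inv,
      ← ENNReal.ofReal_ofNat 2, ← ENNReal.ofReal_mul hC]
    congr 1
    rw [Real.rpow_add (by norm_num), Real.rpow_one]
    ring
  calc ∫⁻ y in {y : Rn n | l ≤ dist x₀ y}, g y ≤ ∫⁻ y in ⋃ k, A k, g y :=
        lintegral_mono_set hcover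
    _ ≤ ∑' k, ∫⁻ y in A k, g y := lintegral_iUnion_le _ _
    _ ≤ ∑' k, ENNReal.ofReal (2 ^ ((n:ℝ) - α) / l * (2⁻¹) ^ k) * fracMax n α f x₀ :=
        ENNReal.tsum_le_tsum hterm
    _ = (∑' k : ℕ, ENNReal.ofReal (2 ^ ((n:ℝ) - α) / l * (2⁻¹) ^ k)) * fracMax n α f x₀ :=
        ENNReal.tsum_mul_right
    _ = ENNReal.ofReal (2 ^ ((n:ℝ) - α + 1) / l) * fracMax n α f x₀ := by rw [hsum]

lemma hContent_le_ball_s15 {n : ℕ} {β : ℝ} (hβ : 0 < β) {E : Set (Rn n)} {x₀ : Rn n} {R : ℝ}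
    (hR : 0 ≤ R) (hE : E ⊆ Metric.ball x₀ R) :
    hContent n β E ≤ ENNReal.ofReal (Real.pi ^ (β / 2) / Real.Gamma (β / 2 + 1) * R ^ β) := by
  classical
  set r : ℕ → NNReal := fun i => if i = 0 then R.toNNReal else 0 with hr
  refine iInf_le_of_le (fun _ => x₀) (iInf_le_of_le r (iInf_le_of_le ?_ ?_))
  · refine hE.trans ?_
    intro y hy
    refine Set.mem_iUnion.mpr ⟨0, ?_⟩
    simpa [hr, Real.coe_toNNReal R hR] using hy
  · rw [tsum_eq_single 0 (fun b hb => by simp [hr, hb, Real.zero_rpow hβ.ne'])]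
    simp [hr, Real.coe_toNNReal R hR]

lemma choquet_le {n : ℕ} {β : ℝ} {Ω : Set (Rn n)} {g : Rn n → ℝ} {K : ℝ} {A : ℝ≥0∞}
    (hβ : 0 < β) (hg : ∀ x ∈ Ω, g x ≤ K) (hΩ : hContent n β Ω ≤ A) :
    choquet n β Ω g ≤ A * ENNReal.ofReal K := by
  have hmono : ∀ t ∈ Set.Ioi (0:ℝ), hContent n β {x | x ∈ Ω ∧ t < g x}
      ≤ (Set.Ioc (0:ℝ) K).indicator (fun _ => A) t := by
    intro t ht
    rcases le_or_gt t K with h | h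
    · rw [Set.indicator_of_mem (Set.mem_Ioc.mpr ⟨ht, h⟩)]
      exact le_trans (hContent_mono (fun x hx => hx.1)) hΩ
    · have : {x | x ∈ Ω ∧ t < g x} = ∅ := by
        ext x; simp only [Set.mem_setOf_eq, Set.mem_empty_iff_false, iff_false, not_and, not_lt]
        intro hx; linarith [hg x hx]
      rw [this, hContent_empty hβ, Set.indicator_of_notMem (fun hmem => absurd hmem.2 (not_le.mpr h))]
      -- 0 ≤ 0
  calc choquet n β Ω g ≤ ∫⁻ t in Set.Ioi (0:ℝ), (Set.Ioc (0:ℝ) K).indicator (fun _ => A) t :=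
        setLIntegral_mono (measurable_const.indicator measurableSet_Ioc) hmono
    _ = A * volume (Set.Ioc (0:ℝ) K ∩ Set.Ioi 0) := by
        rw [lintegral_indicator measurableSet_Ioc, setLIntegral_const,
          Measure.restrict_apply measurableSet_Ioc, mul_comm]
    _ ≤ A * ENNReal.ofReal K := by
        apply mul_le_mul_right
        calc volume (Set.Ioc (0:ℝ) K ∩ Set.Ioi 0) ≤ volume (Set.Ioc (0:ℝ) K) :=
              measure_mono Set.inter_subset_left
          _ = ENNReal.ofReal K := by rw [Real.volume_Ioc]; simp

lemma center_mem_cube {n : ℕ} (x₀ : Rn n) {l : ℝ} (hl : 0 < l) : x₀ ∈ cube n x₀ l := by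
  intro i; simpa using by linarith

lemma pair_comp {n : ℕ} {x₀ x x' y : Rn n} {l : ℝ} (hl : 0 < l)
    (hx : x ∈ cube n x₀ l) (hx' : x' ∈ cube n x₀ l) (hy : y ∉ cube n x₀ (2 * l)) :
    ‖x' - y‖ ≤ (1 + 2 * Real.sqrt n) * ‖x - y‖ := by
  obtain ⟨h1, _, _⟩ := geom hl hx hy
  have hxx' : ‖x - x'‖ ≤ Real.sqrt n * l := by
    have := norm_le_sqrt_mul (x - x') l hl.le (fun i => by
      have h1 := hx i; have h2 := hx' i
      have : (x - x') i = x i - x' i := rfl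
      rw [this]
      calc |x i - x' i| = |(x i - x₀ i) - (x' i - x₀ i)| := by ring_nf
        _ ≤ |x i - x₀ i| + |x' i - x₀ i| := abs_sub _ _
        _ ≤ l := by linarith)
    linarith
  have hsn : (0:ℝ) ≤ Real.sqrt n := Real.sqrt_nonneg _
  calc ‖x' - y‖ ≤ ‖x' - x‖ + ‖x - y‖ := norm_sub_le_norm_sub_add_norm_sub _ _ _
    _ ≤ Real.sqrt n * l + ‖x - y‖ := by rw [norm_sub_rev]; linarith
    _ ≤ (1 + 2 * Real.sqrt n) * ‖x - y‖ := by nlinarith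

lemma integrand_comp {n : ℕ} {α : ℝ} (hα0 : 0 < α) (hαn : α < n) {f : Rn n → ℝ} {x₀ : Rn n}
    {l : ℝ} (hl : 0 < l) (hsupp : Function.support f ⊆ (cube n x₀ (2 * l))ᶜ)
    {x x' : Rn n} (hx : x ∈ cube n x₀ l) (hx' : x' ∈ cube n x₀ l) (y : Rn n) :
    |f y / ‖x - y‖ ^ ((n:ℝ) - α)|
      ≤ (1 + 2 * Real.sqrt n) ^ ((n:ℝ) - α) * |f y / ‖x' - y‖ ^ ((n:ℝ) - α)| := by
  set p : ℝ := (n:ℝ) - α with hpdef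
  have hp : 0 < p := by simp [hpdef]; linarith
  by_cases hfy : f y = 0
  · simp [hfy]
  · have hy : y ∉ cube n x₀ (2 * l) := hsupp (Function.mem_support.mpr hfy)
    have ha : l / 2 ≤ ‖x - y‖ := (geom hl hx hy).1
    have ha' : l / 2 ≤ ‖x' - y‖ := (geom hl hx' hy).1
    have ha0 : (0:ℝ) < ‖x - y‖ := lt_of_lt_of_le (by linarith) ha
    have ha'0 : (0:ℝ) < ‖x' - y‖ := lt_of_lt_of_le (by linarith) ha'
    have hc0 : (0:ℝ) < 1 + 2 * Real.sqrt n := by positivity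
    have hle : ‖x' - y‖ ≤ (1 + 2 * Real.sqrt n) * ‖x - y‖ := pair_comp hl hx hx' hy
    have hA : (0:ℝ) < ‖x - y‖ ^ p := Real.rpow_pos_of_pos ha0 _
    have hA' : (0:ℝ) < ‖x' - y‖ ^ p := Real.rpow_pos_of_pos ha'0 _
    have h1 : ‖x' - y‖ ^ p ≤ (1 + 2 * Real.sqrt n) ^ p * ‖x - y‖ ^ p := by
      rw [← Real.mul_rpow hc0.le ha0.le]
      exact Real.rpow_le_rpow ha'0.le hle hp.le
    rw [abs_div, abs_div, abs_of_nonneg (Real.rpow_nonneg (norm_nonneg _) _),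
      abs_of_nonneg (Real.rpow_nonneg (norm_nonneg _) _), mul_div_assoc'] 
    rw [div_le_div_iff₀ hA hA']
    nlinarith [abs_nonneg (f y)]

lemma kernel_diff {n : ℕ} {α : ℝ} (hα0 : 0 < α) (hαn : α < n) {x₀ x y : Rn n} {l : ℝ}
    (hl : 0 < l) (hx : x ∈ cube n x₀ l) (hy : y ∉ cube n x₀ (2 * l)) :
    |1 / ‖x - y‖ ^ ((n:ℝ) - α) - 1 / ‖x₀ - y‖ ^ ((n:ℝ) - α)|
      ≤ (((n:ℝ) - α) * Real.sqrt n * (1 + Real.sqrt n) ^ ((n:ℝ) - α + 1) / 2) * l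
          * ‖x₀ - y‖ ^ (α - (n:ℝ) - 1) := by
  set p : ℝ := (n:ℝ) - α with hpdef
  have hp : 0 < p := by simp [hpdef]; linarith
  obtain ⟨h1, h2, h3⟩ := geom hl hx hy
  set a := ‖x - y‖
  set b := ‖x₀ - y‖
  have ha0 : (0:ℝ) < a := lt_of_lt_of_le (by linarith) h1
  have hb0 : (0:ℝ) < b := lt_of_lt_of_le hl h2
  have hsn : (0:ℝ) ≤ Real.sqrt n := Real.sqrt_nonneg _
  have hsn1 : (0:ℝ) < 1 + Real.sqrt n := by linarith
  set m := b / (1 + Real.sqrt n) with hm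
  have hm0 : 0 < m := div_pos hb0 hsn1
  have hma : m ≤ a := by
    rw [hm, div_le_iff₀ hsn1]
    nlinarith
  have hmb : m ≤ b := by
    rw [hm, div_le_iff₀ hsn1]
    nlinarith
  have hdiff := rpow_neg_diff_le hp hm0 hma hmb
  have hab : |a - b| ≤ Real.sqrt n * (l / 2) := by
    have h4 : ‖x - x₀‖ ≤ Real.sqrt n * (l / 2) := by
      apply norm_le_sqrt_mul _ _ (by linarith) (fun j => (hx j).le)
    calc |a - b| ≤ ‖(x - y) - (x₀ - y)‖ := abs_norm_sub_norm_le _ _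
      _ = ‖x - x₀‖ := by rw [show (x - y) - (x₀ - y) = x - x₀ by abel]
      _ ≤ Real.sqrt n * (l / 2) := h4
  have hmpow : m ^ (-p - 1) = b ^ (α - (n:ℝ) - 1) * (1 + Real.sqrt n) ^ (p + 1) := by
    have e1 : -p - 1 = α - (n:ℝ) - 1 := by rw [hpdef]; ring
    rw [hm, Real.div_rpow hb0.le hsn1.le, div_eq_mul_inv, ← Real.rpow_neg hsn1.le, e1,
      show -(α - (n:ℝ) - 1) = p + 1 from by rw [hpdef]; ring]
  have hform : ∀ c : ℝ, 0 < c → c ^ (-p) = 1 / c ^ p := by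
    intro c hc
    rw [Real.rpow_neg hc.le, one_div]
  rw [← hform a ha0, ← hform b hb0]
  calc |a ^ (-p) - b ^ (-p)| ≤ p * |a - b| * m ^ (-p - 1) := hdiff
    _ ≤ p * (Real.sqrt n * (l / 2)) * (b ^ (α - (n:ℝ) - 1) * (1 + Real.sqrt n) ^ (p + 1)) := by
        rw [hmpow]
        apply mul_le_mul_of_nonneg_right (mul_le_mul_of_nonneg_left hab hp.le)
        positivity
    _ = (p * Real.sqrt n * (1 + Real.sqrt n) ^ (p + 1) / 2) * l * b ^ (α - (n:ℝ) - 1) := by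
        ring

lemma F_meas {n : ℕ} {α : ℝ} (hα0 : 0 < α) (hαn : α < n) {f : Rn n → ℝ} (hf : Measurable f)
    (x : Rn n) : AEStronglyMeasurable (fun y => f y / ‖x - y‖ ^ ((n:ℝ) - α)) volume := by
  apply Measurable.aestronglyMeasurable
  apply hf.div
  exact ((continuous_const.sub continuous_id).norm.rpow_const
    (fun _ => Or.inr (by linarith))).measurable

lemma integrable_transfer {n : ℕ} {α : ℝ} (hα0 : 0 < α) (hαn : α < n) {f : Rn n → ℝ}
    (hf : Measurable f) {x₀ : Rn n} {l : ℝ} (hl : 0 < l)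
    (hsupp : Function.support f ⊆ (cube n x₀ (2 * l))ᶜ)
    {x x' : Rn n} (hx : x ∈ cube n x₀ l) (hx' : x' ∈ cube n x₀ l)
    (hInt : Integrable (fun y => f y / ‖x' - y‖ ^ ((n:ℝ) - α)) volume) :
    Integrable (fun y => f y / ‖x - y‖ ^ ((n:ℝ) - α)) volume := by
  apply Integrable.mono' (((hInt.abs).const_mul ((1 + 2 * Real.sqrt n) ^ ((n:ℝ) - α)))) 
    (F_meas hα0 hαn hf x)
  filter_upwards with y
  rw [Real.norm_eq_abs]
  exact integrand_comp hα0 hαn hl hsupp hx hx' y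

lemma pointwise_bound {n : ℕ} {α : ℝ} (hα0 : 0 < α) (hαn : α < n) {f : Rn n → ℝ}
    (hf : Measurable f) {x₀ : Rn n} {l : ℝ} (hl : 0 < l)
    (hsupp : Function.support f ⊆ (cube n x₀ (2 * l))ᶜ)
    (hInt : Integrable (fun y => f y / ‖x₀ - y‖ ^ ((n:ℝ) - α)) volume)
    {x : Rn n} (hx : x ∈ cube n x₀ l) :
    ENNReal.ofReal |riesz n α f x - riesz n α f x₀|
      ≤ ENNReal.ofReal ((rieszConst n α)⁻¹ *
          ((((n:ℝ) - α) * Real.sqrt n * (1 + Real.sqrt n) ^ ((n:ℝ) - α + 1) / 2)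
            * 2 ^ ((n:ℝ) - α + 1))) * fracMax n α f x₀ := by
  set γ := rieszConst n α with hγdef
  have hγ : 0 < γ := rieszConst_pos hα0 hαn
  set cK := ((n:ℝ) - α) * Real.sqrt n * (1 + Real.sqrt n) ^ ((n:ℝ) - α + 1) / 2 with hcK
  have hcK0 : 0 ≤ cK := by
    rw [hcK]
    have : (0:ℝ) ≤ (1 + Real.sqrt n) ^ ((n:ℝ) - α + 1) :=
      Real.rpow_nonneg (by positivity) _
    have hsn : (0:ℝ) ≤ Real.sqrt n := Real.sqrt_nonneg _
    have : (0:ℝ) ≤ (n:ℝ) - α := by linarith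
    positivity
  have hx₀ : x₀ ∈ cube n x₀ l := center_mem_cube x₀ hl
  set F : Rn n → Rn n → ℝ := fun x y => f y / ‖x - y‖ ^ ((n:ℝ) - α) with hF
  have hIntx : Integrable (F x) volume := integrable_transfer hα0 hαn hf hl hsupp hx hx₀ hInt
  set S : Set (Rn n) := {y | l ≤ dist x₀ y} with hS
  have hSmeas : MeasurableSet S :=
    measurableSet_le measurable_const (measurable_const.dist measurable_id)
  set M := fracMax n α f x₀ with hM
  -- pointwise kernel-difference bound in ℝ≥0∞
  have hpoint : ∀ y, ENNReal.ofReal ‖F x y - F x₀ y‖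
      ≤ S.indicator (fun y => ENNReal.ofReal (cK * l) *
          (ENNReal.ofReal |f y| * ENNReal.ofReal (dist x₀ y ^ (α - (n:ℝ) - 1)))) y := by
    intro y
    by_cases hfy : f y = 0
    · simp [hF, hfy]
    · have hy : y ∉ cube n x₀ (2 * l) := hsupp (Function.mem_support.mpr hfy)
      have hyS : y ∈ S := by
        rw [hS, Set.mem_setOf_eq, dist_eq_norm]
        exact (geom hl hx hy).2.1
      rw [Set.indicator_of_mem hyS]
      have hreal : ‖F x y - F x₀ y‖ ≤ cK * l * (|f y| * dist x₀ y ^ (α - (n:ℝ) - 1)) := by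
        have hdiff : F x y - F x₀ y
            = f y * (1 / ‖x - y‖ ^ ((n:ℝ) - α) - 1 / ‖x₀ - y‖ ^ ((n:ℝ) - α)) := by
          rw [hF]; simp only []
          rw [mul_sub, mul_one_div, mul_one_div]
        rw [Real.norm_eq_abs, hdiff, abs_mul, dist_eq_norm]
        have := kernel_diff hα0 hαn hl hx hy
        calc |f y| * |1 / ‖x - y‖ ^ ((n:ℝ) - α) - 1 / ‖x₀ - y‖ ^ ((n:ℝ) - α)|
            ≤ |f y| * (cK * l * ‖x₀ - y‖ ^ (α - (n:ℝ) - 1)) :=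
              mul_le_mul_of_nonneg_left this (abs_nonneg _)
          _ = cK * l * (|f y| * ‖x₀ - y‖ ^ (α - (n:ℝ) - 1)) := by ring
      calc ENNReal.ofReal ‖F x y - F x₀ y‖
          ≤ ENNReal.ofReal (cK * l * (|f y| * dist x₀ y ^ (α - (n:ℝ) - 1))) :=
            ENNReal.ofReal_le_ofReal hreal
        _ = ENNReal.ofReal (cK * l) *
            (ENNReal.ofReal |f y| * ENNReal.ofReal (dist x₀ y ^ (α - (n:ℝ) - 1))) := by
            rw [ENNReal.ofReal_mul (by positivity), ENNReal.ofReal_mul (abs_nonneg _)]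
  -- lintegral bound
  have hD : ∫⁻ y, ENNReal.ofReal ‖F x y - F x₀ y‖
      ≤ ENNReal.ofReal (γ * (γ⁻¹ * (cK * 2 ^ ((n:ℝ) - α + 1)))) * M := by
    have e : γ * (γ⁻¹ * (cK * 2 ^ ((n:ℝ) - α + 1))) = cK * 2 ^ ((n:ℝ) - α + 1) := by
      field_simp
    rw [e]
    calc ∫⁻ y, ENNReal.ofReal ‖F x y - F x₀ y‖
        ≤ ∫⁻ y, S.indicator (fun y => ENNReal.ofReal (cK * l) *
            (ENNReal.ofReal |f y| * ENNReal.ofReal (dist x₀ y ^ (α - (n:ℝ) - 1)))) y :=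
          lintegral_mono hpoint
      _ = ENNReal.ofReal (cK * l) * ∫⁻ y in S,
            ENNReal.ofReal |f y| * ENNReal.ofReal (dist x₀ y ^ (α - (n:ℝ) - 1)) := by
          rw [lintegral_indicator hSmeas, lintegral_const_mul' _ _ ENNReal.ofReal_ne_top]
      _ ≤ ENNReal.ofReal (cK * l) * (ENNReal.ofReal (2 ^ ((n:ℝ) - α + 1) / l) * M) :=
          mul_le_mul_right (tail_bound hαn hf x₀ hl) _
      _ = ENNReal.ofReal (cK * 2 ^ ((n:ℝ) - α + 1)) * M := by
          rw [← mul_assoc, ← ENNReal.ofReal_mul (by positivity)]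
          congr 2
          field_simp
  -- assemble
  have hdiff_eq : riesz n α f x - riesz n α f x₀ = γ⁻¹ * ∫ y, (F x y - F x₀ y) := by
    rw [riesz, riesz, ← hγdef, ← mul_sub, integral_sub hIntx hInt]
  rw [hdiff_eq, abs_mul, abs_of_pos (inv_pos.mpr hγ)]
  have hnorm : |∫ y, (F x y - F x₀ y)| ≤ (∫⁻ y, ENNReal.ofReal ‖F x y - F x₀ y‖).toReal := by
    rw [← Real.norm_eq_abs]
    exact norm_integral_le_lintegral_norm _
  calc ENNReal.ofReal (γ⁻¹ * |∫ y, (F x y - F x₀ y)|)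
      ≤ ENNReal.ofReal (γ⁻¹ * (∫⁻ y, ENNReal.ofReal ‖F x y - F x₀ y‖).toReal) :=
        ENNReal.ofReal_le_ofReal (mul_le_mul_of_nonneg_left hnorm (by positivity))
    _ = ENNReal.ofReal γ⁻¹ * ENNReal.ofReal (∫⁻ y, ENNReal.ofReal ‖F x y - F x₀ y‖).toReal := by
        rw [ENNReal.ofReal_mul (by positivity)]
    _ ≤ ENNReal.ofReal γ⁻¹ * ∫⁻ y, ENNReal.ofReal ‖F x y - F x₀ y‖ :=
        mul_le_mul_right ENNReal.ofReal_toReal_le _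
    _ ≤ ENNReal.ofReal γ⁻¹ * (ENNReal.ofReal (γ * (γ⁻¹ * (cK * 2 ^ ((n:ℝ) - α + 1)))) * M) :=
        mul_le_mul_right hD _
    _ = ENNReal.ofReal (γ⁻¹ * (cK * 2 ^ ((n:ℝ) - α + 1))) * M := by
        rw [← mul_assoc, ← ENNReal.ofReal_mul (by positivity)]
        congr 2
        field_simp

set_option maxHeartbeats 1000000 in

lemma riesz_continuousOn {n : ℕ} {α : ℝ} (hα0 : 0 < α) (hαn : α < n) {f : Rn n → ℝ}
    (hf : Measurable f) {x₀ : Rn n} {l : ℝ} (hl : 0 < l)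
    (hsupp : Function.support f ⊆ (cube n x₀ (2 * l))ᶜ)
    (hInt : Integrable (fun y => f y / ‖x₀ - y‖ ^ ((n:ℝ) - α)) volume) :
    ContinuousOn (riesz n α f) (cube n x₀ l) := by
  intro x hx
  apply ContinuousAt.continuousWithinAt
  have key : ContinuousAt (fun x : Rn n => ∫ y, f y / ‖x - y‖ ^ ((n:ℝ) - α)) x := by
    refine continuousAt_of_dominated (F := fun (x : Rn n) (y : Rn n) => f y / ‖x - y‖ ^ ((n:ℝ) - α))
      (μ := volume) (x₀ := x)
      (bound := fun y => (1 + 2 * Real.sqrt n) ^ ((n:ℝ) - α) * |f y / ‖x₀ - y‖ ^ ((n:ℝ) - α)|)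
      ?_ ?_ ?_ ?_
    · filter_upwards with x' using F_meas hα0 hαn hf x'
    · have hev : ∀ᶠ x' in nhds x, x' ∈ cube n x₀ l := (cube_open n x₀ l).eventually_mem hx
      filter_upwards [hev] with x' hx'
      filter_upwards with y
      rw [Real.norm_eq_abs]
      exact integrand_comp hα0 hαn hl hsupp hx' (center_mem_cube x₀ hl) y
    · exact (hInt.abs).const_mul _
    · filter_upwards with y
      by_cases hfy : f y = 0
      · have : (fun x' : Rn n => f y / ‖x' - y‖ ^ ((n:ℝ) - α)) = fun _ => (0:ℝ) :=
          funext fun x' => by simp [hfy]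
        rw [this]; exact continuousAt_const
      · have hy := hsupp (Function.mem_support.mpr hfy)
        have hxy : (0:ℝ) < ‖x - y‖ := lt_of_lt_of_le (by linarith) (geom hl hx hy).1
        have hcont : Continuous fun x' : Rn n => ‖x' - y‖ ^ ((n:ℝ) - α) :=
          (continuous_id.sub continuous_const).norm.rpow_const (fun _ => Or.inr (by linarith))
        exact ContinuousAt.div continuousAt_const hcont.continuousAt
          (ne_of_gt (Real.rpow_pos_of_pos hxy _))
  exact key.const_mul _

lemma riesz_zero {n : ℕ} {α : ℝ} (hα0 : 0 < α) (hαn : α < n) {f : Rn n → ℝ}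
    (hf : Measurable f) {x₀ : Rn n} {l : ℝ} (hl : 0 < l)
    (hsupp : Function.support f ⊆ (cube n x₀ (2 * l))ᶜ)
    (hInt : ¬ Integrable (fun y => f y / ‖x₀ - y‖ ^ ((n:ℝ) - α)) volume) :
    ∀ x ∈ cube n x₀ l, riesz n α f x = 0 := by
  intro x hx
  rw [riesz, integral_undef, mul_zero]
  intro h
  exact hInt (integrable_transfer hα0 hαn hf hl hsupp (center_mem_cube x₀ hl) hx h)

/-- For `f ∈ M^α_1(ℝⁿ)` supported outside `2Q` with `I_α f ∈ L¹_loc(ℝⁿ)`: `I_α f` is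
continuous on `Q` and there is a constant `c` (depending on `Q`) with
`∫_Q |I_α f - c| dH^β_∞ ≤ C ℓ(Q)^β M_α f(x₀)`, `C = C(n, α, β)`. -/
theorem stmt15 (n : ℕ) (α β : ℝ) (hα0 : 0 < α) (hαn : α < n) (hβ1 : 0 < β) (hβ2 : β ≤ n) :
    ∃ C : ℝ, 0 < C ∧ ∀ (x₀ : Rn n) (l : ℝ), 0 < l →
      ∀ f : Rn n → ℝ, Measurable f → morrey n α 1 f < ⊤ →
        Function.support f ⊆ (cube n x₀ (2 * l))ᶜ →
        LocallyIntegrable (riesz n α f) volume →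
        ContinuousOn (riesz n α f) (cube n x₀ l) ∧
          ∃ c : ℝ,
            choquet n β (cube n x₀ l) (fun x => |riesz n α f x - c|)
              ≤ ENNReal.ofReal (C * l ^ β) * fracMax n α f x₀ := by
  have hn : (0:ℝ) < n := lt_trans hα0 hαn
  set C₁ := (rieszConst n α)⁻¹ *
      ((((n:ℝ) - α) * Real.sqrt n * (1 + Real.sqrt n) ^ ((n:ℝ) - α + 1) / 2)
        * 2 ^ ((n:ℝ) - α + 1)) with hC₁
  set ω := Real.pi ^ (β / 2) / Real.Gamma (β / 2 + 1) with hω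
  have hω0 : 0 < ω := div_pos (Real.rpow_pos_of_pos Real.pi_pos _)
    (Real.Gamma_pos_of_pos (by linarith))
  have hsn : 0 < Real.sqrt n := Real.sqrt_pos.mpr hn
  have hC₁0 : 0 < C₁ := by
    rw [hC₁]
    have h1 : 0 < (rieszConst n α)⁻¹ := inv_pos.mpr (rieszConst_pos hα0 hαn)
    have h2 : (0:ℝ) < (1 + Real.sqrt n) ^ ((n:ℝ) - α + 1) :=
      Real.rpow_pos_of_pos (by linarith) _
    have h3 : (0:ℝ) < (2:ℝ) ^ ((n:ℝ) - α + 1) := Real.rpow_pos_of_pos (by norm_num) _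
    have h4 : (0:ℝ) < (n:ℝ) - α := by linarith
    positivity
  refine ⟨ω * Real.sqrt n ^ β * C₁, by positivity, ?_⟩
  intro x₀ l hl f hf hmor hsupp hloc
  have hQball : cube n x₀ l ⊆ Metric.ball x₀ (l * Real.sqrt n) := by
    intro z hz
    rw [Metric.mem_ball, dist_eq_norm]
    calc ‖z - x₀‖ ≤ Real.sqrt n * (l / 2) :=
          norm_le_sqrt_mul _ _ (by linarith) (fun i => (hz i).le)
      _ < l * Real.sqrt n := by nlinarith
  have hhc : hContent n β (cube n x₀ l) ≤ ENNReal.ofReal (ω * (l * Real.sqrt n) ^ β) :=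
    hContent_le_ball_s15 hβ1 (by positivity) hQball
  by_cases hInt : Integrable (fun y => f y / ‖x₀ - y‖ ^ ((n:ℝ) - α)) volume
  · refine ⟨riesz_continuousOn hα0 hαn hf hl hsupp hInt, riesz n α f x₀, ?_⟩
    set M := fracMax n α f x₀ with hM
    by_cases hMtop : M = ⊤
    · have hne : ENNReal.ofReal (ω * Real.sqrt n ^ β * C₁ * l ^ β) ≠ 0 := by
        rw [ne_eq, ENNReal.ofReal_eq_zero, not_le]
        positivity
      rw [hMtop, ENNReal.mul_top hne]
      exact le_top
    · have hgK : ∀ x ∈ cube n x₀ l, |riesz n α f x - riesz n α f x₀| ≤ C₁ * M.toReal := by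
        intro x hx
        have h := pointwise_bound hα0 hαn hf hl hsupp hInt hx
        rw [← hC₁, ← hM, ← ENNReal.ofReal_toReal hMtop,
          ← ENNReal.ofReal_mul hC₁0.le] at h
        exact (ENNReal.ofReal_le_ofReal_iff (by positivity)).mp h
      calc choquet n β (cube n x₀ l) (fun x => |riesz n α f x - riesz n α f x₀|)
          ≤ ENNReal.ofReal (ω * (l * Real.sqrt n) ^ β) * ENNReal.ofReal (C₁ * M.toReal) :=
            choquet_le hβ1 hgK hhc
        _ = ENNReal.ofReal (ω * Real.sqrt n ^ β * C₁ * l ^ β) * ENNReal.ofReal M.toReal := by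
            rw [← ENNReal.ofReal_mul (by positivity), ← ENNReal.ofReal_mul (by positivity)]
            congr 1
            rw [Real.mul_rpow hl.le hsn.le]
            ring
        _ ≤ ENNReal.ofReal (ω * Real.sqrt n ^ β * C₁ * l ^ β) * M :=
            mul_le_mul_right ENNReal.ofReal_toReal_le _
  · have hz := riesz_zero hα0 hαn hf hl hsupp hInt
    constructor
    · exact ContinuousOn.congr continuousOn_const (fun x hx => hz x hx)
    · refine ⟨0, ?_⟩
      have hgK : ∀ x ∈ cube n x₀ l, |riesz n α f x - 0| ≤ 0 := fun x hx => by
        rw [hz x hx]; simp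
      calc choquet n β (cube n x₀ l) (fun x => |riesz n α f x - 0|)
          ≤ ENNReal.ofReal (ω * (l * Real.sqrt n) ^ β) * ENNReal.ofReal 0 :=
            choquet_le hβ1 hgK hhc
        _ = 0 := by simp
        _ ≤ _ := zero_le
end
end
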